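/- arXiv:1906.05215 — 13 statements merged into one kernel-verified Lean document; each statement's English description precedes it below -/
import Mathlib

section
/- A bounded operator T on a Hilbert space H is an m-isometry (i.e., the sum over k from 0 to m of (-1)^k * binom(m,k) * T*^k T^k equals 0) if and only if for every h in H, the sequence n ↦ ‖T^n h‖² agrees with a polynomial in n of degree at most m-1. -/
open Finset Polynomial

/-- The alternating binomial sum equals `(-1)^m` times the iterated forward difference. -/
lemma aux_diff_eq (a : ℕ → ℝ) (m n : ℕ) :
    (fwdDiff (1:ℕ))^[m] a n
      = (-1:ℝ)^m * ∑ k ∈ Finset.range (m+1), (-1:ℝ)^k * (m.choose k) * a (n+k) := by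
  rw [fwdDiff_iter_eq_sum_shift, Finset.mul_sum]
  refine Finset.sum_congr rfl fun k hk => ?_
  have hk' : k ≤ m := Nat.lt_succ_iff.mp (Finset.mem_range.mp hk)
  have h1 : (-1:ℝ)^(m-k) * (-1:ℝ)^k = (-1:ℝ)^m := by
    rw [← pow_add, Nat.sub_add_cancel hk']
  have h2 : (-1:ℝ)^k * (-1:ℝ)^k = 1 := by
    rw [← pow_add]; exact Even.neg_one_pow ⟨k, rfl⟩
  have h3 : (-1:ℝ)^(m-k) = (-1:ℝ)^m * (-1:ℝ)^k := by
    calc (-1:ℝ)^(m-k) = (-1:ℝ)^(m-k) * ((-1:ℝ)^k * (-1:ℝ)^k) := by rw [h2, mul_one]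
    _ = ((-1:ℝ)^(m-k) * (-1:ℝ)^k) * (-1:ℝ)^k := by ring
    _ = (-1:ℝ)^m * (-1:ℝ)^k := by rw [h1]
  have hk1 : k • (1:ℕ) = k := by simp
  rw [hk1, zsmul_eq_mul]
  push_cast
  rw [h3]; ring

/-- A polynomial of degree `< m` has vanishing `m`-th forward difference. -/
lemma aux_poly_diff_zero : ∀ (m : ℕ) (p : Polynomial ℝ), p.degree < (m : ℕ) →
    ∀ n : ℕ, (fwdDiff (1:ℕ))^[m] (fun k : ℕ => p.eval (k:ℝ)) n = 0 := by
  intro m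
  induction m with
  | zero =>
    intro p hp n
    have h0 : p.degree < 0 := by exact_mod_cast hp
    have : p = 0 := by
      rw [← Polynomial.degree_eq_bot]
      exact Nat.WithBot.lt_zero_iff.mp h0
    simp [this]
  | succ m ih =>
    intro p hp n
    set q : Polynomial ℝ := p.comp (X + C 1) - p with hq
    have hqev : (fwdDiff (1:ℕ)) (fun k : ℕ => p.eval (k:ℝ))
        = fun k : ℕ => q.eval (k:ℝ) := by
      funext k
      simp only [fwdDiff, hq, Polynomial.eval_sub, Polynomial.eval_comp, Polynomial.eval_add,
        Polynomial.eval_X, Polynomial.eval_C]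
      push_cast
      ring
    have hqdeg : q.degree < (m : ℕ) := by
      rcases eq_or_ne p 0 with rfl | hp0
      · simp only [hq, Polynomial.zero_comp, sub_zero, Polynomial.degree_zero]
        exact WithBot.bot_lt_coe m
      · have hnd : (X + C 1 : Polynomial ℝ).natDegree = 1 := Polynomial.natDegree_X_add_C 1
        have hlc : (p.comp (X + C 1)).leadingCoeff = p.leadingCoeff := by
          rw [Polynomial.leadingCoeff_comp (by rw [hnd]; exact one_ne_zero)]
          rw [(Polynomial.monic_X_add_C (1:ℝ)).leadingCoeff, one_pow, mul_one]
        have hc0 : p.comp (X + C 1) ≠ 0 := by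
          rw [← Polynomial.leadingCoeff_ne_zero, hlc, Polynomial.leadingCoeff_ne_zero]
          exact hp0
        have hdc : (p.comp (X + C 1)).degree = p.degree := by
          rw [Polynomial.degree_eq_natDegree hc0, Polynomial.degree_eq_natDegree hp0,
            Polynomial.natDegree_comp, hnd, mul_one]
        have h4 : q.degree < p.degree := by
          have := Polynomial.degree_sub_lt hdc hc0 hlc
          rwa [hdc] at this
        have h5 : p.degree ≤ (m : ℕ) := by
          have h6 : p.natDegree < m + 1 :=
            (Polynomial.natDegree_lt_iff_degree_lt hp0).mpr (by exact_mod_cast hp)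
          exact Polynomial.degree_le_of_natDegree_le (Nat.lt_succ_iff.mp h6)
        exact lt_of_lt_of_le h4 h5
    rw [Function.iterate_succ_apply, hqev]
    exact ih q hqdeg n

/-- If all iterated differences of order `m` vanish, the sequence is polynomial
of degree `≤ m - 1`. -/
lemma aux_newton (a : ℕ → ℝ) (m : ℕ) (hm : 0 < m)
    (ha : ∀ n, (fwdDiff (1:ℕ))^[m] a n = 0) :
    ∃ p : Polynomial ℝ, p.degree ≤ (m - 1 : ℕ) ∧ ∀ n : ℕ, p.eval (n : ℝ) = a n := by
  set d : ℕ → ℝ := fun i => (fwdDiff (1:ℕ))^[i] a 0 with hd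
  have hdzero : ∀ i, m ≤ i → d i = 0 := by
    intro i hi
    have h1 : (fwdDiff (1:ℕ))^[m] a = 0 := funext ha
    have h2 : (fwdDiff (1:ℕ))^[i] a = (fwdDiff (1:ℕ))^[i - m] ((fwdDiff (1:ℕ))^[m] a) := by
      rw [← Function.iterate_add_apply, Nat.sub_add_cancel hi]
    have h3 : (fwdDiff (1:ℕ))^[i - m] (0 : ℕ → ℝ) = 0 := by
      induction (i - m) with
      | zero => simp
      | succ j ihj => rw [Function.iterate_succ_apply, show (fwdDiff (1:ℕ)) (0 : ℕ → ℝ) = 0 by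
          funext x; simp [fwdDiff], ihj]
    simp only [hd, h2, h1, h3, Pi.zero_apply]
  refine ⟨∑ i ∈ Finset.range m, Polynomial.C (d i / (i.factorial : ℝ)) * descPochhammer ℝ i,
    ?_, ?_⟩
  · apply le_trans (Polynomial.degree_sum_le _ _)
    apply Finset.sup_le
    intro i hi
    have hi' : i ≤ m - 1 := Nat.le_sub_one_of_lt (Finset.mem_range.mp hi)
    calc (Polynomial.C (d i / (i.factorial : ℝ)) * descPochhammer ℝ i).degree
        ≤ (Polynomial.C (d i / (i.factorial : ℝ))).degree + (descPochhammer ℝ i).degree :=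
          Polynomial.degree_mul_le _ _
      _ ≤ 0 + (i : ℕ) := by
          apply add_le_add Polynomial.degree_C_le
          rw [Polynomial.degree_eq_natDegree (monic_descPochhammer ℝ i).ne_zero,
            descPochhammer_natDegree]
      _ ≤ ((m - 1 : ℕ) : WithBot ℕ) := by
          rw [zero_add]; exact_mod_cast hi'
  · intro n
    have heval : ∀ i : ℕ, (Polynomial.C (d i / (i.factorial : ℝ)) * descPochhammer ℝ i).eval (n:ℝ)
        = d i * (n.choose i : ℝ) := by
      intro i
      rw [Polynomial.eval_mul, Polynomial.eval_C, descPochhammer_eval_eq_descFactorial,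
        Nat.descFactorial_eq_factorial_mul_choose]
      have : (i.factorial : ℝ) ≠ 0 := Nat.cast_ne_zero.mpr i.factorial_ne_zero
      push_cast
      field_simp
    rw [Polynomial.eval_finset_sum]
    simp_rw [heval]
    have hnewton : a n = ∑ k ∈ Finset.range (n+1), (n.choose k : ℝ) * d k := by
      have h0 := shift_eq_sum_fwdDiff_iter (1:ℕ) a n 0
      simp only [zero_add, smul_eq_mul, mul_one, nsmul_eq_mul] at h0
      exact h0
    rw [hnewton]
    have e1 : ∑ i ∈ Finset.range m, d i * (n.choose i : ℝ)
        = ∑ i ∈ Finset.range (m + n + 1), d i * (n.choose i : ℝ) := by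
      apply Finset.sum_subset
      · apply Finset.range_subset_range.mpr; omega
      · intro i hit his
        simp only [Finset.mem_range] at hit his
        rw [hdzero i (by omega), zero_mul]
    have e2 : ∑ k ∈ Finset.range (n+1), (n.choose k : ℝ) * d k
        = ∑ k ∈ Finset.range (m + n + 1), (n.choose k : ℝ) * d k := by
      apply Finset.sum_subset
      · apply Finset.range_subset_range.mpr; omega
      · intro k hkt hks
        simp only [Finset.mem_range] at hkt hks
        rw [Nat.choose_eq_zero_of_lt (by omega)]
        simp
    rw [e1, e2]
    exact Finset.sum_congr rfl fun i _ => mul_comm _ _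

theorem stmt_0 {H : Type*} [NormedAddCommGroup H] [InnerProductSpace ℂ H] [CompleteSpace H]
    (T : H →L[ℂ] H) (m : ℕ) (hm : 0 < m) :
    (∀ h : H, ∑ k ∈ Finset.range (m + 1),
        (-1 : ℝ) ^ k * (m.choose k) * ‖(T ^ k) h‖ ^ 2 = 0) ↔
    (∀ h : H, ∃ p : Polynomial ℝ, p.degree ≤ (m - 1 : ℕ) ∧
        ∀ n : ℕ, p.eval (n : ℝ) = ‖(T ^ n) h‖ ^ 2) := by
  constructor
  · intro hyp h
    set a : ℕ → ℝ := fun n => ‖(T ^ n) h‖ ^ 2 with ha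
    have hdiff : ∀ n, (fwdDiff (1:ℕ))^[m] a n = 0 := by
      intro n
      rw [aux_diff_eq]
      have key : ∑ k ∈ Finset.range (m + 1), (-1 : ℝ) ^ k * (m.choose k) * a (n + k) = 0 := by
        have h2 := hyp ((T ^ n) h)
        rw [← h2]
        refine Finset.sum_congr rfl fun k _ => ?_
        have hnorm : (T ^ (n + k)) h = (T ^ k) ((T ^ n) h) := by
          rw [Nat.add_comm n k, pow_add]; rfl
        show (-1:ℝ)^k * (m.choose k) * ‖(T ^ (n + k)) h‖ ^ 2 = _
        rw [hnorm]
      rw [key, mul_zero]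
    exact aux_newton a m hm hdiff
  · intro hyp h
    obtain ⟨p, hdeg, hp⟩ := hyp h
    set a : ℕ → ℝ := fun n => ‖(T ^ n) h‖ ^ 2 with ha
    have hdeg' : p.degree < (m : ℕ) := by
      apply lt_of_le_of_lt hdeg
      exact_mod_cast Nat.sub_lt hm Nat.one_pos
    have hz : (fwdDiff (1:ℕ))^[m] a 0 = 0 := by
      have he : a = fun k : ℕ => p.eval (k:ℝ) := by funext k; rw [hp k]
      rw [he]
      exact aux_poly_diff_zero m p hdeg' 0
    rw [aux_diff_eq] at hz
    have hne : (-1:ℝ)^m ≠ 0 := by positivity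
    have := (mul_eq_zero.mp hz).resolve_left hne
    simpa [ha] using this
end

section
/- If T is an m-isometric bounded operator on a Hilbert space, then for every n ∈ ℕ, T*^n T^n = ∑_{k=0}^{m-1} (n)_k * ((-1)^k / k!) * B_k(T), where (n)_k = n(n-1)···(n-k+1) is the falling factorial and B_k(T) = ∑_{j=0}^k (-1)^j C(k,j) T*^j T^j. -/
open Finset

private lemma alt_sum_C' (N : ℕ) :
    ∑ i ∈ range (N+1), (-1:ℂ)^i * (N.choose i : ℂ) = if N = 0 then 1 else 0 := by
  have h2 : ((∑ i ∈ range (N+1), (-1:ℤ)^i * (N.choose i : ℤ) : ℤ) : ℂ)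
      = ((if N = 0 then 1 else 0 : ℤ) : ℂ) :=
    congrArg _ Int.alternating_sum_range_choose
  push_cast at h2
  exact h2

private lemma key_sum' (n j : ℕ) (hj : j ≤ n) :
    ∑ k ∈ range (n+1), ((-1:ℂ)^k * (n.choose k : ℂ)) * ((-1:ℂ)^j * (k.choose j : ℂ))
      = if j = n then 1 else 0 := by
  have h1 : ∑ k ∈ range (n+1), ((-1:ℂ)^k * (n.choose k : ℂ)) * ((-1:ℂ)^j * (k.choose j : ℂ))
      = ∑ k ∈ Ico j (n+1), ((-1:ℂ)^k * (n.choose k : ℂ)) * ((-1:ℂ)^j * (k.choose j : ℂ)) := by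
    rw [range_eq_Ico]
    apply (sum_subset (Ico_subset_Ico (Nat.zero_le _) le_rfl) ?_).symm
    intro k hk hk2
    simp only [mem_Ico] at hk hk2
    have : k < j := by omega
    rw [Nat.choose_eq_zero_of_lt this]
    ring
  rw [h1, sum_Ico_eq_sum_range]
  have h2 : ∀ i ∈ range (n + 1 - j),
      ((-1:ℂ)^(j+i) * (n.choose (j+i) : ℂ)) * ((-1:ℂ)^j * ((j+i).choose j : ℂ))
      = ((n.choose j : ℂ)) * ((-1:ℂ)^i * ((n-j).choose i : ℂ)) := by
    intro i hi
    simp only [mem_range] at hi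
    have hkn : j + i ≤ n := by omega
    have hc : (n.choose (j+i) : ℂ) * ((j+i).choose j : ℂ)
        = (n.choose j : ℂ) * ((n-j).choose (j+i-j) : ℂ) := by
      exact_mod_cast congrArg (Nat.cast : ℕ → ℂ) (Nat.choose_mul (n := n) (Nat.le_add_right j i))
    have hc' : (n.choose (j+i) : ℂ) * ((j+i).choose j : ℂ)
        = (n.choose j : ℂ) * ((n-j).choose i : ℂ) := by simpa using hc
    have hs : ((-1:ℂ)^(j+i)) * ((-1:ℂ)^j) = (-1:ℂ)^i := by
      rw [pow_add]; ring_nf; rw [mul_comm j 2, pow_mul]; norm_num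
    calc ((-1:ℂ)^(j+i) * (n.choose (j+i) : ℂ)) * ((-1:ℂ)^j * ((j+i).choose j : ℂ))
        = (((-1:ℂ)^(j+i)) * ((-1:ℂ)^j)) * ((n.choose (j+i) : ℂ) * ((j+i).choose j : ℂ)) := by
          ring
      _ = ((-1:ℂ)^i) * ((n.choose j : ℂ) * ((n-j).choose i : ℂ)) := by rw [hs, hc']
      _ = _ := by ring
  rw [sum_congr rfl h2, ← mul_sum]
  have hrange : n + 1 - j = (n - j) + 1 := by omega
  rw [hrange, alt_sum_C']
  rcases eq_or_ne j n with h | h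
  · simp [h]
  · have : n - j ≠ 0 := by omega
    simp [this, h]

private lemma inversion' {A : Type*} [AddCommGroup A] [Module ℂ A] (f : ℕ → A) (n : ℕ) :
    f n = ∑ k ∈ range (n+1), ((-1:ℂ)^k * (n.choose k : ℂ)) •
      (∑ j ∈ range (k+1), ((-1:ℂ)^j * (k.choose j : ℂ)) • f j) := by
  have h1 : ∀ k ∈ range (n+1),
      ((-1:ℂ)^k * (n.choose k : ℂ)) • (∑ j ∈ range (k+1), ((-1:ℂ)^j * (k.choose j : ℂ)) • f j)
      = ∑ j ∈ range (n+1),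
          (((-1:ℂ)^k * (n.choose k : ℂ)) * ((-1:ℂ)^j * (k.choose j : ℂ))) • f j := by
    intro k hk
    simp only [mem_range] at hk
    rw [smul_sum]
    simp_rw [smul_smul]
    apply sum_subset (by intro x hx; simp only [mem_range] at *; omega)
    intro j hj hj2
    simp only [mem_range] at hj hj2
    have : k < j := by omega
    rw [Nat.choose_eq_zero_of_lt this]
    simp
  rw [sum_congr rfl h1, sum_comm]
  simp_rw [← sum_smul]
  have h2 : ∀ j ∈ range (n+1),
      (∑ k ∈ range (n+1), ((-1:ℂ)^k * (n.choose k : ℂ)) * ((-1:ℂ)^j * (k.choose j : ℂ))) • f j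
      = (if j = n then (1:ℂ) else 0) • f j := by
    intro j hj
    simp only [mem_range] at hj
    rw [key_sum' n j (by omega)]
  rw [sum_congr rfl h2]
  simp

private lemma Bop_rec' {A : Type*} [Ring A] [Module ℂ A] [IsScalarTower ℂ A A]
    [SMulCommClass ℂ A A]
    (f : ℕ → A) (a b : A) (hf : ∀ j, f (j+1) = a * f j * b) (k : ℕ) :
    ∑ j ∈ range (k+2), ((-1:ℂ)^j * ((k+1).choose j : ℂ)) • f j
    = (∑ j ∈ range (k+1), ((-1:ℂ)^j * (k.choose j : ℂ)) • f j)
      - a * (∑ j ∈ range (k+1), ((-1:ℂ)^j * (k.choose j : ℂ)) • f j) * b := by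
  have hR : a * (∑ j ∈ range (k+1), ((-1:ℂ)^j * (k.choose j : ℂ)) • f j) * b
      = ∑ j ∈ range (k+1), ((-1:ℂ)^j * (k.choose j : ℂ)) • f (j+1) := by
    rw [Finset.mul_sum, Finset.sum_mul]
    refine sum_congr rfl fun j _ => ?_
    rw [mul_smul_comm, smul_mul_assoc, hf]
  rw [hR]
  rw [show k + 2 = (k + 1) + 1 from rfl, Finset.sum_range_succ' _ (k+1)]
  have hsplit : ∀ i ∈ range (k+1),
      ((-1:ℂ)^(i+1) * ((k+1).choose (i+1) : ℂ)) • f (i+1)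
      = ((-1:ℂ)^(i+1) * (k.choose (i+1) : ℂ)) • f (i+1)
        - ((-1:ℂ)^i * (k.choose i : ℂ)) • f (i+1) := by
    intro i _
    rw [Nat.choose_succ_succ]
    push_cast
    rw [pow_succ]
    module
  rw [sum_congr rfl hsplit, Finset.sum_sub_distrib]
  have h2 : ∑ i ∈ range (k+1), ((-1:ℂ)^(i+1) * (k.choose (i+1) : ℂ)) • f (i+1)
        + ((-1:ℂ)^0 * ((k+1).choose 0 : ℂ)) • f 0
      = ∑ j ∈ range (k+1), ((-1:ℂ)^j * (k.choose j : ℂ)) • f j := by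
    rw [Finset.sum_range_succ]
    rw [Nat.choose_succ_self]
    rw [Finset.sum_range_succ' (fun j => ((-1:ℂ)^j * (k.choose j : ℂ)) • f j) k]
    simp
  rw [← h2]
  abel

theorem stmt_3 {H : Type*} [NormedAddCommGroup H] [InnerProductSpace ℂ H] [CompleteSpace H]
    (T : H →L[ℂ] H) (m : ℕ) (hm : 0 < m)
    (hT : ∑ j ∈ Finset.range (m + 1), ((-1 : ℂ) ^ j * (m.choose j : ℂ)) •
        ((ContinuousLinearMap.adjoint T) ^ j * T ^ j) = 0) :
    ∀ n : ℕ, (ContinuousLinearMap.adjoint T) ^ n * T ^ n =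
      ∑ k ∈ Finset.range m,
        ((n.descFactorial k : ℂ) * ((-1 : ℂ) ^ k / (k.factorial : ℂ))) •
          (∑ j ∈ Finset.range (k + 1), ((-1 : ℂ) ^ j * (k.choose j : ℂ)) •
            ((ContinuousLinearMap.adjoint T) ^ j * T ^ j)) := by
  intro n
  set S := ContinuousLinearMap.adjoint T with hS
  set f : ℕ → (H →L[ℂ] H) := fun j => S ^ j * T ^ j with hfdef
  set B : ℕ → (H →L[ℂ] H) :=
    fun k => ∑ j ∈ range (k+1), ((-1:ℂ)^j * (k.choose j : ℂ)) • f j with hBdef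
  have hf : ∀ j, f (j+1) = S * f j * T := by
    intro j
    simp only [hfdef]
    rw [pow_succ' S j, pow_succ T j, mul_assoc, mul_assoc, mul_assoc]
  have hBm : B m = 0 := hT
  have hBk : ∀ k, m ≤ k → B k = 0 := by
    intro k hk
    induction k, hk using Nat.le_induction with
    | base => exact hBm
    | succ k hk ih =>
      have := Bop_rec' f S T hf k
      simp only [hBdef] at ih ⊢
      rw [show k + 1 + 1 = k + 2 from rfl, this, ih]
      simp
  have hcoef : ∀ k : ℕ, (n.descFactorial k : ℂ) * ((-1:ℂ)^k / (k.factorial : ℂ))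
      = (-1:ℂ)^k * (n.choose k : ℂ) := by
    intro k
    have h1 : (n.descFactorial k : ℂ) = (k.factorial : ℂ) * (n.choose k : ℂ) := by
      exact_mod_cast congrArg (Nat.cast : ℕ → ℂ) (Nat.descFactorial_eq_factorial_mul_choose n k)
    have h2 : (k.factorial : ℂ) ≠ 0 := Nat.cast_ne_zero.mpr k.factorial_ne_zero
    field_simp [h1]
    exact h1
  have hL : f n = ∑ k ∈ range (n+1), ((-1:ℂ)^k * (n.choose k : ℂ)) • B k := inversion' f n
  -- extend both sums to range N
  set N := max (n+1) m with hN
  have hL2 : ∑ k ∈ range (n+1), ((-1:ℂ)^k * (n.choose k : ℂ)) • B k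
      = ∑ k ∈ range N, ((-1:ℂ)^k * (n.choose k : ℂ)) • B k := by
    apply sum_subset (by intro x hx; simp only [mem_range] at *; omega)
    intro k hk hk2
    simp only [mem_range] at hk hk2
    have : n < k := by omega
    rw [Nat.choose_eq_zero_of_lt this]
    simp
  have hR2 : ∑ k ∈ range m, ((-1:ℂ)^k * (n.choose k : ℂ)) • B k
      = ∑ k ∈ range N, ((-1:ℂ)^k * (n.choose k : ℂ)) • B k := by
    apply sum_subset (by intro x hx; simp only [mem_range] at *; omega)
    intro k hk hk2
    simp only [mem_range] at hk hk2
    rw [hBk k (by omega)]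
    simp
  calc f n = ∑ k ∈ range N, ((-1:ℂ)^k * (n.choose k : ℂ)) • B k := by rw [hL, hL2]
    _ = ∑ k ∈ range m, ((-1:ℂ)^k * (n.choose k : ℂ)) • B k := hR2.symm
    _ = ∑ k ∈ range m,
        ((n.descFactorial k : ℂ) * ((-1:ℂ)^k / (k.factorial : ℂ))) • B k := by
      refine sum_congr rfl fun k _ => ?_
      rw [hcoef]
end

section
/- A unilateral weighted shift W on ℓ²(ℕ) with bounded weights is an m-isometry if and only if ‖W^n e_0‖² is a polynomial in n of degree at most m−1, where e_0 is the first standard basis vector. -/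
open Finset Polynomial

noncomputable section WSAux

/-- product of weights: coefficient of `W^k e_i`. -/
def wsC (lam : ℕ → ℂ) (i k : ℕ) : ℂ := ∏ j ∈ Finset.range k, lam (i + j)

/-- squared norm of `W^k e_i`. -/
def wsB (lam : ℕ → ℂ) (i k : ℕ) : ℝ := ‖wsC lam i k‖ ^ 2

lemma wsC_add (lam : ℕ → ℂ) (i n k : ℕ) :
    wsC lam i (n + k) = wsC lam i n * wsC lam (i + n) k := by
  unfold wsC
  rw [Finset.prod_range_add]
  congr 1
  refine Finset.prod_congr rfl fun j _ => ?_
  congr 1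
  omega

lemma wsB_add (lam : ℕ → ℂ) (i n k : ℕ) :
    wsB lam i (n + k) = wsB lam i n * wsB lam (i + n) k := by
  unfold wsB
  rw [wsC_add, norm_mul, mul_pow]

lemma wsB_zero (lam : ℕ → ℂ) (i : ℕ) : wsB lam i 0 = 1 := by
  simp [wsB, wsC]

lemma ws_pow_single (lam : ℕ → ℂ)
    (W : lp (fun _ : ℕ => ℂ) 2 →L[ℂ] lp (fun _ : ℕ => ℂ) 2)
    (hW : ∀ n : ℕ, W (lp.single 2 n (1 : ℂ)) = lam n • lp.single 2 (n + 1) (1 : ℂ))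
    (k i : ℕ) :
    (W ^ k) (lp.single 2 i (1 : ℂ)) = wsC lam i k • lp.single 2 (i + k) (1 : ℂ) := by
  induction k generalizing i with
  | zero => simp [wsC]
  | succ k ih =>
    have h1 : (W ^ (k + 1)) (lp.single 2 i (1 : ℂ))
        = (W ^ k) (W (lp.single 2 i (1 : ℂ))) := by
      rw [pow_succ]; rfl
    rw [h1, hW, map_smul, ih, smul_smul]
    have hidx : i + 1 + k = i + (k + 1) := by omega
    rw [hidx]
    congr 1
    unfold wsC
    rw [Finset.prod_range_succ']
    rw [mul_comm]
    congr 1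
    refine Finset.prod_congr rfl fun j _ => ?_
    congr 1
    omega

/-- coordinate projection as a continuous linear map -/
def coordCLM (j : ℕ) : lp (fun _ : ℕ => ℂ) 2 →L[ℂ] ℂ :=
  LinearMap.mkContinuous
    { toFun := fun f => f j
      map_add' := fun f g => rfl
      map_smul' := fun c f => rfl }
    1 (fun f => by
      show ‖f j‖ ≤ 1 * ‖f‖
      simpa using lp.norm_apply_le_norm (by norm_num : (2 : ENNReal) ≠ 0) f j)

lemma coordCLM_apply (j : ℕ) (f : lp (fun _ : ℕ => ℂ) 2) : coordCLM j f = f j := rfl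

lemma ws_hasSum_single_img (lam : ℕ → ℂ)
    (W : lp (fun _ : ℕ => ℂ) 2 →L[ℂ] lp (fun _ : ℕ => ℂ) 2)
    (hW : ∀ n : ℕ, W (lp.single 2 n (1 : ℂ)) = lam n • lp.single 2 (n + 1) (1 : ℂ))
    (k : ℕ) (h : lp (fun _ : ℕ => ℂ) 2) :
    HasSum (fun i => lp.single 2 (i + k) (h i * wsC lam i k)) ((W ^ k) h) := by
  have hs : HasSum (fun i : ℕ => lp.single 2 i (h i)) h :=
    lp.hasSum_single (by norm_num) h
  have hs2 := (W ^ k).hasSum hs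
  have hfun : (fun i : ℕ => (W ^ k) (lp.single 2 i (h i)))
      = fun i : ℕ => lp.single 2 (i + k) (h i * wsC lam i k) := by
    funext i
    have h1 : lp.single (E := fun _ : ℕ => ℂ) 2 i (h i)
        = h i • lp.single (E := fun _ : ℕ => ℂ) 2 i (1 : ℂ) := by
      rw [← lp.single_smul (E := fun _ : ℕ => ℂ) 2 i (h i) (1 : ℂ), smul_eq_mul, mul_one]
    rw [h1, map_smul, ws_pow_single lam W hW, smul_smul,
      ← lp.single_smul (E := fun _ : ℕ => ℂ) 2 (i + k) (h i * wsC lam i k) (1 : ℂ),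
      smul_eq_mul, mul_one]
  rw [hfun] at hs2
  exact hs2

lemma ws_coord (lam : ℕ → ℂ)
    (W : lp (fun _ : ℕ => ℂ) 2 →L[ℂ] lp (fun _ : ℕ => ℂ) 2)
    (hW : ∀ n : ℕ, W (lp.single 2 n (1 : ℂ)) = lam n • lp.single 2 (n + 1) (1 : ℂ))
    (k : ℕ) (h : lp (fun _ : ℕ => ℂ) 2) (j : ℕ) :
    ((W ^ k) h : ∀ _ : ℕ, ℂ) j
      = if k ≤ j then h (j - k) * wsC lam (j - k) k else 0 := by
  have hs3 := (coordCLM j).hasSum (ws_hasSum_single_img lam W hW k h)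
  simp only [coordCLM_apply] at hs3
  by_cases hkj : k ≤ j
  · have hfun : (fun i : ℕ => (lp.single (E := fun _ : ℕ => ℂ) 2 (i + k)
        (h i * wsC lam i k) : ∀ _ : ℕ, ℂ) j)
        = fun i : ℕ => if i = j - k then h (j - k) * wsC lam (j - k) k else 0 := by
      funext i
      by_cases hi : i = j - k
      · subst hi
        have : j = (j - k) + k := by omega
        rw [if_pos rfl, ← this, lp.single_apply_self]
      · rw [lp.single_apply_ne 2 _ _ (by omega : j ≠ i + k), if_neg hi]
    rw [hfun] at hs3
    rw [if_pos hkj]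
    exact hs3.unique (hasSum_ite_eq (j - k) _)
  · have hfun : (fun i : ℕ => (lp.single (E := fun _ : ℕ => ℂ) 2 (i + k)
        (h i * wsC lam i k) : ∀ _ : ℕ, ℂ) j) = fun _ : ℕ => (0 : ℂ) := by
      funext i
      exact lp.single_apply_ne 2 _ _ (by omega : j ≠ i + k)
    rw [hfun] at hs3
    rw [if_neg hkj]
    exact hs3.unique hasSum_zero

lemma ws_normsq (lam : ℕ → ℂ)
    (W : lp (fun _ : ℕ => ℂ) 2 →L[ℂ] lp (fun _ : ℕ => ℂ) 2)
    (hW : ∀ n : ℕ, W (lp.single 2 n (1 : ℂ)) = lam n • lp.single 2 (n + 1) (1 : ℂ))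
    (k : ℕ) (h : lp (fun _ : ℕ => ℂ) 2) :
    HasSum (fun i => ‖h i‖ ^ 2 * wsB lam i k) (‖(W ^ k) h‖ ^ 2) := by
  have hrp : ∀ x : ℝ, x ^ (2 : ENNReal).toReal = x ^ 2 := fun x => by
    rw [show (2 : ENNReal).toReal = ((2 : ℕ) : ℝ) by norm_num, Real.rpow_natCast]
  have G := lp.hasSum_norm (by norm_num : 0 < (2 : ENNReal).toReal) ((W ^ k) h)
  simp only [hrp] at G
  have hfun : (fun j : ℕ => ‖((W ^ k) h : ∀ _ : ℕ, ℂ) j‖ ^ 2)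
      = fun j : ℕ => if k ≤ j then ‖h (j - k)‖ ^ 2 * wsB lam (j - k) k else 0 := by
    funext j
    rw [ws_coord lam W hW]
    split
    · rw [norm_mul, mul_pow]; rfl
    · simp
  rw [hfun] at G
  have hinj : Function.Injective (fun i : ℕ => i + k) := add_left_injective k
  have hsupp : ∀ j ∉ Set.range (fun i : ℕ => i + k),
      (fun j : ℕ => if k ≤ j then ‖h (j - k)‖ ^ 2 * wsB lam (j - k) k else 0) j = 0 := by
    intro j hj
    have hkj : ¬ k ≤ j := by
      intro hle
      exact hj ⟨j - k, show j - k + k = j by omega⟩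
    simp only [hkj, if_false]
  have G2 := (hinj.hasSum_iff hsupp).mpr G
  have hfun2 : ((fun j : ℕ => if k ≤ j then ‖h (j - k)‖ ^ 2 * wsB lam (j - k) k else 0)
      ∘ (fun i : ℕ => i + k)) = fun i : ℕ => ‖h i‖ ^ 2 * wsB lam i k := by
    funext i
    simp only [Function.comp_apply]
    rw [if_pos (Nat.le_add_left k i), show i + k - k = i by omega]
  rwa [hfun2] at G2

lemma ws_normsq_single (lam : ℕ → ℂ)
    (W : lp (fun _ : ℕ => ℂ) 2 →L[ℂ] lp (fun _ : ℕ => ℂ) 2)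
    (hW : ∀ n : ℕ, W (lp.single 2 n (1 : ℂ)) = lam n • lp.single 2 (n + 1) (1 : ℂ))
    (n k : ℕ) :
    ‖(W ^ k) (lp.single 2 n (1 : ℂ))‖ ^ 2 = wsB lam n k := by
  rw [ws_pow_single lam W hW, norm_smul, mul_pow]
  have : ‖lp.single (E := fun _ : ℕ => ℂ) 2 (n + k) (1 : ℂ)‖ = 1 := by
    have := lp.norm_single (E := fun _ : ℕ => ℂ) (by norm_num : (0 : ENNReal) < 2)
      (n + k) (1 : ℂ)
    simpa using this
  rw [this]
  simp [wsB]

lemma ws_bridge (lam : ℕ → ℂ) (m n : ℕ) :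
    (fwdDiff (1 : ℕ))^[m] (fun t : ℕ => wsB lam 0 t) n
      = (-1 : ℝ) ^ m * wsB lam 0 n *
        ∑ k ∈ Finset.range (m + 1), (-1 : ℝ) ^ k * (m.choose k) * wsB lam n k := by
  rw [fwdDiff_iter_eq_sum_shift, Finset.mul_sum]
  refine Finset.sum_congr rfl fun k hk => ?_
  have hk' : k ≤ m := by
    have := Finset.mem_range.mp hk; omega
  have hsign : (-1 : ℝ) ^ (m - k) = (-1) ^ m * (-1) ^ k := by
    calc (-1 : ℝ) ^ (m - k) = (-1) ^ (m - k) * (-1) ^ (2 * k) := by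
          rw [pow_mul]; norm_num
      _ = (-1) ^ (m - k + 2 * k) := (pow_add _ _ _).symm
      _ = (-1) ^ (m + k) := by congr 1; omega
      _ = (-1) ^ m * (-1) ^ k := pow_add _ _ _
  have harg : n + k • (1 : ℕ) = n + k := by simp
  rw [harg, zsmul_eq_mul]
  show ((((-1 : ℤ) ^ (m - k) * (m.choose k) : ℤ) : ℝ)) * wsB lam 0 (n + k) = _
  rw [wsB_add lam 0 n k, zero_add]
  push_cast
  rw [hsign]
  ring

lemma fwdDiff_iter_zero_fn (j : ℕ) :
    (fwdDiff (1 : ℕ))^[j] (fun _ : ℕ => (0 : ℝ)) = fun _ : ℕ => (0 : ℝ) := by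
  induction j with
  | zero => rfl
  | succ j ih =>
    rw [Function.iterate_succ_apply]
    have h0 : fwdDiff (1 : ℕ) (fun _ : ℕ => (0 : ℝ)) = fun _ : ℕ => (0 : ℝ) := by
      funext t; simp [fwdDiff]
    rw [h0, ih]

lemma poly_fwdDiff_zero : ∀ (M : ℕ) (q : Polynomial ℝ), q.degree < (M : WithBot ℕ) →
    ∀ n : ℕ, (fwdDiff (1 : ℕ))^[M] (fun t : ℕ => q.eval (t : ℝ)) n = 0 := by
  intro M
  induction M with
  | zero =>
    intro q hq n
    have hq0 : q = 0 := by
      refine Polynomial.degree_eq_bot.mp ?_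
      have : q.degree < (0 : WithBot ℕ) := by exact_mod_cast hq
      exact Nat.WithBot.lt_zero_iff.mp this
    subst hq0
    simp
  | succ M ih =>
    intro q hq n
    rw [Function.iterate_succ_apply]
    have hD : fwdDiff (1 : ℕ) (fun t : ℕ => q.eval (t : ℝ))
        = fun t : ℕ => (q.comp (Polynomial.X + Polynomial.C 1) - q).eval (t : ℝ) := by
      funext t
      simp only [fwdDiff, Polynomial.eval_sub, Polynomial.eval_comp, Polynomial.eval_add,
        Polynomial.eval_X, Polynomial.eval_one, Polynomial.eval_C]
      push_cast
      ring
    rw [hD]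
    refine ih _ ?_ n
    rcases le_or_gt q.degree 0 with h0 | h0
    · have hzero : q.comp (Polynomial.X + Polynomial.C 1) - q = 0 := by
        conv_lhs => rw [Polynomial.eq_C_of_degree_le_zero h0]
        simp
      rw [hzero, Polynomial.degree_zero]
      exact_mod_cast WithBot.bot_lt_coe M
    · have hq0 : q ≠ 0 := fun hc => by simp [hc] at h0
      have hXC : (Polynomial.X + Polynomial.C (1 : ℝ)).natDegree = 1 :=
        Polynomial.natDegree_X_add_C 1
      have hlcXC : (Polynomial.X + Polynomial.C (1 : ℝ)).leadingCoeff = 1 := by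
        have := Polynomial.monic_X_add_C (1 : ℝ)
        exact this
      have hlc : (q.comp (Polynomial.X + Polynomial.C 1)).leadingCoeff = q.leadingCoeff := by
        rw [Polynomial.leadingCoeff_comp (by rw [hXC]; norm_num), hlcXC, one_pow, mul_one]
      have h2 : q.comp (Polynomial.X + Polynomial.C 1) ≠ 0 := by
        intro hc
        rw [hc, Polynomial.leadingCoeff_zero] at hlc
        exact hq0 (Polynomial.leadingCoeff_eq_zero.mp hlc.symm)
      have hd : (q.comp (Polynomial.X + Polynomial.C 1)).degree = q.degree := by
        rw [Polynomial.degree_eq_natDegree h2, Polynomial.degree_eq_natDegree hq0,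
          Polynomial.natDegree_comp, hXC, mul_one]
      have hlt := Polynomial.degree_sub_lt hd h2 hlc
      rw [hd] at hlt
      have hqM : q.degree ≤ (M : WithBot ℕ) := by
        rw [Polynomial.degree_eq_natDegree hq0] at hq ⊢
        have : q.natDegree < M + 1 := by exact_mod_cast hq
        exact_mod_cast Nat.lt_succ_iff.mp this
      exact lt_of_lt_of_le hlt hqM

theorem stmt_6 (lam : ℕ → ℂ) (hbd : ∃ C : ℝ, ∀ n, ‖lam n‖ ≤ C)
    (W : lp (fun _ : ℕ => ℂ) 2 →L[ℂ] lp (fun _ : ℕ => ℂ) 2)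
    (hW : ∀ n : ℕ, W (lp.single 2 n (1 : ℂ)) = lam n • lp.single 2 (n + 1) (1 : ℂ))
    (m : ℕ) (hm : 0 < m) :
    (∀ h, ∑ k ∈ Finset.range (m + 1),
        (-1 : ℝ) ^ k * (m.choose k) * ‖(W ^ k) h‖ ^ 2 = 0) ↔
    (∃ p : Polynomial ℝ, p.degree ≤ (m - 1 : ℕ) ∧
      ∀ n : ℕ, p.eval (n : ℝ) = ‖(W ^ n) (lp.single 2 0 (1 : ℂ))‖ ^ 2) := by
  have hnrm : ∀ n k : ℕ, ‖(W ^ k) (lp.single 2 n (1 : ℂ))‖ ^ 2 = wsB lam n k :=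
    fun n k => ws_normsq_single lam W hW n k
  constructor
  · intro H
    have key : ∀ n, ∑ k ∈ Finset.range (m + 1),
        (-1 : ℝ) ^ k * (m.choose k) * wsB lam n k = 0 := by
      intro n
      rw [← H (lp.single 2 n (1 : ℂ))]
      exact Finset.sum_congr rfl fun k _ => by rw [hnrm]
    have hDm : (fwdDiff (1 : ℕ))^[m] (fun t : ℕ => wsB lam 0 t) = fun _ : ℕ => (0 : ℝ) := by
      funext n
      rw [ws_bridge, key n, mul_zero]
    set a : ℕ → ℝ := fun k => (fwdDiff (1 : ℕ))^[k] (fun t : ℕ => wsB lam 0 t) 0 with ha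
    have ha0 : ∀ k, m ≤ k → a k = 0 := by
      intro k hk
      have h1 : (fwdDiff (1 : ℕ))^[k] (fun t : ℕ => wsB lam 0 t)
          = (fwdDiff (1 : ℕ))^[k - m] ((fwdDiff (1 : ℕ))^[m] (fun t : ℕ => wsB lam 0 t)) := by
        rw [← Function.iterate_add_apply]
        congr 1
        omega
      show (fwdDiff (1 : ℕ))^[k] (fun t : ℕ => wsB lam 0 t) 0 = 0
      rw [h1, hDm, fwdDiff_iter_zero_fn]
    have hNewton : ∀ n : ℕ, wsB lam 0 n
        = ∑ k ∈ Finset.range (n + 1), (n.choose k : ℝ) * a k := by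
      intro n
      have h1 := shift_eq_sum_fwdDiff_iter (1 : ℕ) (fun t : ℕ => wsB lam 0 t) n 0
      simp only [zero_add, smul_eq_mul, mul_one, nsmul_eq_mul] at h1
      exact h1
    refine ⟨∑ k ∈ Finset.range m,
      Polynomial.C (a k / (k.factorial : ℝ)) * descPochhammer ℝ k, ?_, ?_⟩
    · refine (Polynomial.degree_sum_le _ _).trans ?_
      refine Finset.sup_le fun k hk => ?_
      calc (Polynomial.C (a k / (k.factorial : ℝ)) * descPochhammer ℝ k).degree
          ≤ (Polynomial.C (a k / (k.factorial : ℝ))).degree + (descPochhammer ℝ k).degree :=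
            Polynomial.degree_mul_le _ _
        _ ≤ 0 + (k : WithBot ℕ) := by
            refine add_le_add Polynomial.degree_C_le ?_
            refine Polynomial.degree_le_natDegree.trans ?_
            rw [descPochhammer_natDegree]
        _ = (k : WithBot ℕ) := zero_add _
        _ ≤ ((m - 1 : ℕ) : WithBot ℕ) := by
            have hkm : k ≤ m - 1 := by
              have := Finset.mem_range.mp hk; omega
            exact_mod_cast hkm
    · intro n
      rw [hnrm 0 n, Polynomial.eval_finset_sum]
      have hterm : ∀ k : ℕ,
          (Polynomial.C (a k / (k.factorial : ℝ)) * descPochhammer ℝ k).eval (n : ℝ)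
          = (n.choose k : ℝ) * a k := by
        intro k
        rw [Polynomial.eval_mul, Polynomial.eval_C, descPochhammer_eval_eq_descFactorial,
          Nat.descFactorial_eq_factorial_mul_choose]
        have hfac : (k.factorial : ℝ) ≠ 0 := Nat.cast_ne_zero.mpr k.factorial_ne_zero
        push_cast
        field_simp
      calc ∑ k ∈ Finset.range m,
            (Polynomial.C (a k / (k.factorial : ℝ)) * descPochhammer ℝ k).eval (n : ℝ)
          = ∑ k ∈ Finset.range m, (n.choose k : ℝ) * a k :=
            Finset.sum_congr rfl fun k _ => hterm k
        _ = ∑ k ∈ Finset.range (m + n + 1), (n.choose k : ℝ) * a k := by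
            refine Finset.sum_subset (Finset.range_subset_range.mpr (by omega)) ?_
            intro k hk1 hk2
            have hmk : m ≤ k := by
              simp only [Finset.mem_range] at hk1 hk2
              omega
            rw [ha0 k hmk, mul_zero]
        _ = ∑ k ∈ Finset.range (n + 1), (n.choose k : ℝ) * a k := by
            symm
            refine Finset.sum_subset (Finset.range_subset_range.mpr (by omega)) ?_
            intro k hk1 hk2
            have hnk : n < k := by
              simp only [Finset.mem_range] at hk1 hk2
              omega
            rw [Nat.choose_eq_zero_of_lt hnk]
            simp
        _ = wsB lam 0 n := (hNewton n).symm
  · rintro ⟨p, hdeg, hp⟩ h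
    have hgp : ∀ n : ℕ, wsB lam 0 n = p.eval (n : ℝ) := fun n => by
      rw [hp n, hnrm 0 n]
    have hgne : ∀ n, wsB lam 0 n ≠ 0 := by
      intro n hn
      have hroot : ∀ t : ℕ, p.IsRoot ((n : ℝ) + t) := by
        intro t
        have h0 : wsB lam 0 (n + t) = 0 := by
          rw [wsB_add, hn, zero_mul]
        have h2 := hgp (n + t)
        rw [h0] at h2
        push_cast at h2
        exact h2.symm
      have hpz : p = 0 := by
        refine Polynomial.eq_zero_of_infinite_isRoot p ?_
        refine Set.infinite_of_injective_forall_mem (f := fun t : ℕ => (n : ℝ) + t) ?_ hroot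
        intro x y hxy
        have : (x : ℝ) = y := by simpa using hxy
        exact_mod_cast this
      have h1 := hgp 0
      rw [hpz, wsB_zero] at h1
      simp at h1
    have hDm : ∀ n, (fwdDiff (1 : ℕ))^[m] (fun t : ℕ => wsB lam 0 t) n = 0 := by
      intro n
      have hfeq : (fun t : ℕ => wsB lam 0 t) = fun t : ℕ => p.eval (t : ℝ) := funext hgp
      rw [hfeq]
      refine poly_fwdDiff_zero m p (lt_of_le_of_lt hdeg ?_) n
      exact_mod_cast (by omega : m - 1 < m)
    have key : ∀ n, ∑ k ∈ Finset.range (m + 1),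
        (-1 : ℝ) ^ k * (m.choose k) * wsB lam n k = 0 := by
      intro n
      have hb := (ws_bridge lam m n).symm
      rw [hDm n] at hb
      rcases mul_eq_zero.mp hb with h1 | h1
      · exact absurd h1 (mul_ne_zero (pow_ne_zero _ (by norm_num)) (hgne n))
      · exact h1
    have hsum : ∀ k : ℕ, HasSum (fun i : ℕ => ‖h i‖ ^ 2 * wsB lam i k) (‖(W ^ k) h‖ ^ 2) :=
      fun k => ws_normsq lam W hW k h
    calc ∑ k ∈ Finset.range (m + 1), (-1 : ℝ) ^ k * (m.choose k) * ‖(W ^ k) h‖ ^ 2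
        = ∑ k ∈ Finset.range (m + 1),
            ∑' i : ℕ, (-1 : ℝ) ^ k * (m.choose k) * (‖h i‖ ^ 2 * wsB lam i k) := by
          refine Finset.sum_congr rfl fun k _ => ?_
          rw [← (hsum k).tsum_eq, ← tsum_mul_left]
      _ = ∑' i : ℕ, ∑ k ∈ Finset.range (m + 1),
            (-1 : ℝ) ^ k * (m.choose k) * (‖h i‖ ^ 2 * wsB lam i k) :=
          (Summable.tsum_finsetSum fun k _ => ((hsum k).summable.mul_left _)).symm
      _ = ∑' i : ℕ, ‖h i‖ ^ 2 * ∑ k ∈ Finset.range (m + 1),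
            (-1 : ℝ) ^ k * (m.choose k) * wsB lam i k := by
          refine tsum_congr fun i => ?_
          rw [Finset.mul_sum]
          exact Finset.sum_congr rfl fun k _ => by ring
      _ = 0 := by
          simp [key]

end WSAux
end

section
/- Let V be a nonempty open subset of a Hilbert space H and {L_m}_{m≥1} a sequence of bounded operators such that for every h ∈ V there exists m with ⟨L_m h, h⟩ = 0. Then there exists m such that L_m = 0. -/
open Metric Set

theorem stmt_8 {H : Type*} [NormedAddCommGroup H] [InnerProductSpace ℂ H] [CompleteSpace H]
    (V : Set H) (hV : IsOpen V) (hne : V.Nonempty)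
    (L : ℕ → H →L[ℂ] H)
    (hL : ∀ h ∈ V, ∃ m : ℕ, (inner ℂ ((L m) h) h : ℂ) = 0) :
    ∃ m : ℕ, L m = 0 := by
  obtain ⟨x, hx⟩ := hne
  obtain ⟨r, hr, hball⟩ := Metric.isOpen_iff.mp hV x hx
  set B : Set H := Metric.closedBall x (r/2) with hB
  have hBV : B ⊆ V := (Metric.closedBall_subset_ball (by linarith)).trans hball
  haveI : CompleteSpace B := Metric.isClosed_closedBall.completeSpace_coe
  haveI : Nonempty B := ⟨⟨x, Metric.mem_closedBall_self (by linarith)⟩⟩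
  set f : ℕ → Set B := fun m => {h : B | (inner ℂ ((L m) (h : H)) (h : H) : ℂ) = 0} with hf
  have hclosed : ∀ m, IsClosed (f m) := by
    intro m
    apply isClosed_eq _ continuous_const
    exact Continuous.inner ((L m).continuous.comp continuous_subtype_val)
      continuous_subtype_val
  have hcover : ⋃ m, f m = univ := by
    ext h
    simp only [mem_iUnion, mem_univ, iff_true, hf, mem_setOf_eq]
    exact hL h (hBV h.2)
  obtain ⟨m, z, hz⟩ := nonempty_interior_of_iUnion_of_closed hclosed hcover
  -- translate the subtype interior to an open set of H
  obtain ⟨t, hts, htopen, hzt⟩ := mem_interior.mp hz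
  obtain ⟨U, hUopen, hUt⟩ := isOpen_induced_iff.mp htopen
  -- get an open nonempty subset of ball x (r/2) where the quadratic form vanishes
  have hzU : (z : H) ∈ U := by rw [← hUt] at hzt; exact hzt
  have hzcl : (z : H) ∈ closure (Metric.ball x (r/2)) := by
    rw [closure_ball x (by linarith : r/2 ≠ 0)]
    exact z.2
  obtain ⟨w, hwU, hwb⟩ := mem_closure_iff.mp hzcl U hUopen hzU
  have hq : ∀ h ∈ U ∩ Metric.ball x (r/2), (inner ℂ ((L m) h) h : ℂ) = 0 := by
    rintro h ⟨hhU, hhb⟩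
    have hhB : h ∈ B := Metric.ball_subset_closedBall hhb
    have : (⟨h, hhB⟩ : B) ∈ t := by rw [← hUt]; exact hhU
    exact hts this
  -- w is an interior point: get ρ > 0 with ball w ρ ⊆ U ∩ ball x (r/2)
  obtain ⟨ρ, hρ, hρsub⟩ := Metric.isOpen_iff.mp (hUopen.inter Metric.isOpen_ball) w ⟨hwU, hwb⟩
  have hqw : ∀ h ∈ Metric.ball w ρ, (inner ℂ ((L m) h) h : ℂ) = 0 := fun h hh => hq h (hρsub hh)
  -- now show L m = 0 via inner_map_self_eq_zero
  refine ⟨m, ?_⟩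
  have key : ∀ y : H, (inner ℂ ((L m) y) y : ℂ) = 0 := by
    intro y
    rcases eq_or_ne y 0 with rfl | hy
    · simp
    · have hny : (0:ℝ) < ‖y‖ := norm_pos_iff.mpr hy
      have expand : ∀ s : ℝ, 0 < s → s * ‖y‖ < ρ →
          (s:ℂ) * (inner ℂ ((L m) y) w + inner ℂ ((L m) w) y)
            + (s:ℂ)^2 * inner ℂ ((L m) y) y = 0 := by
        intro s hs hsy
        have hmem : w + (s:ℂ) • y ∈ Metric.ball w ρ := by
          rw [Metric.mem_ball, dist_eq_norm]
          simp only [add_sub_cancel_left, norm_smul, Complex.norm_ofNat]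
          calc ‖(s:ℂ)‖ * ‖y‖ = s * ‖y‖ := by
                rw [Complex.norm_real, Real.norm_eq_abs, abs_of_pos hs]
            _ < ρ := hsy
        have h0 := hqw _ hmem
        have hw0 : (inner ℂ ((L m) w) w : ℂ) = 0 := hqw w (Metric.mem_ball_self hρ)
        simp only [map_add, map_smul, inner_add_left, inner_add_right, inner_smul_left, inner_smul_right,
          Complex.conj_ofReal] at h0
        linear_combination h0 - hw0
      set s₁ : ℝ := ρ / (2 * ‖y‖) with hs₁
      set s₂ : ℝ := ρ / (4 * ‖y‖) with hs₂
      have hs₁p : 0 < s₁ := by positivity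
      have hs₂p : 0 < s₂ := by positivity
      have hs₁b : s₁ * ‖y‖ < ρ := by
        rw [hs₁, div_mul_eq_mul_div, mul_comm (2:ℝ), ← div_div, mul_div_assoc]
        rw [div_self (ne_of_gt hny)]
        linarith
      have hs₂b : s₂ * ‖y‖ < ρ := by
        rw [hs₂, div_mul_eq_mul_div, mul_comm (4:ℝ), ← div_div, mul_div_assoc]
        rw [div_self (ne_of_gt hny)]
        linarith
      have e₁ := expand s₁ hs₁p hs₁b
      have e₂ := expand s₂ hs₂p hs₂b
      have hne12 : s₁ ≠ s₂ := by
        have : s₂ < s₁ := div_lt_div_of_pos_left hρ (by positivity) (by linarith)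
        exact (ne_of_lt this).symm
      have hs₁c : (s₁ : ℂ) ≠ 0 := by exact_mod_cast ne_of_gt hs₁p
      have hs₂c : (s₂ : ℂ) ≠ 0 := by exact_mod_cast ne_of_gt hs₂p
      have hdiff : (s₁ : ℂ) ≠ (s₂ : ℂ) := by exact_mod_cast hne12
      -- s₂ * e₁ - s₁ * e₂ : s₁ s₂ (s₁ - s₂) C = 0
      have : (s₁:ℂ) * (s₂:ℂ) * ((s₁:ℂ) - (s₂:ℂ)) * inner ℂ ((L m) y) y = 0 := by
        have h₁ := congrArg (fun z => (s₂:ℂ) * z) e₁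
        have h₂ := congrArg (fun z => (s₁:ℂ) * z) e₂
        simp only [mul_zero] at h₁ h₂
        linear_combination h₁ - h₂
      rcases mul_eq_zero.mp this with h | h
      · exact absurd h (by
          intro hc
          rcases mul_eq_zero.mp hc with h' | h'
          · rcases mul_eq_zero.mp h' with h'' | h''
            · exact hs₁c h''
            · exact hs₂c h''
          · exact hdiff (sub_eq_zero.mp h'))
      · exact h
  have := (inner_map_self_eq_zero ((L m) : H →ₗ[ℂ] H)).mp key
  ext v
  have := LinearMap.congr_fun this v
  simpa using this
end

section
/- If m ∈ ℕ and T is a bounded operator on a Hilbert space H such that there exists a nonempty open set V ⊆ H with the property that for every h ∈ V the sequence ‖T^n h‖² is a polynomial in n of degree at most m−1, then T is an m-isometry. -/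
open Polynomial Finset fwdDiff

lemma aux_comp : ∀ p : Polynomial ℝ, (p.comp (X + 1)).degree = p.degree := by
  intro p
  by_cases h0 : p = 0
  · simp [h0]
  · have hc : p.comp (X + 1) ≠ 0 := fun h => by
      have := comp_eq_zero_iff.mp h
      rcases this with h | ⟨_, h⟩
      · exact h0 h
      · have : (X + 1 : Polynomial ℝ).natDegree = 0 := by rw [h]; simp
        simp [show (X + 1 : Polynomial ℝ) = X + C 1 by simp, natDegree_X_add_C] at this
    rw [degree_eq_natDegree h0, degree_eq_natDegree hc, natDegree_comp]
    norm_cast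
    simp [show (X + 1 : Polynomial ℝ) = X + C 1 by simp, natDegree_X_add_C]

lemma degree_comp_sub (p : Polynomial ℝ) (hp : p ≠ 0) :
    (p.comp (X + 1) - p).degree < p.degree := by
  have hd : (p.comp (X + 1)).degree = p.degree := aux_comp p
  have := degree_sub_lt hd (fun h => hp (by
      have := hd.symm.trans (congrArg degree h)
      exact degree_eq_bot.mp (by simpa using this)))
    (by rw [leadingCoeff_comp (by simp [show (X + 1 : Polynomial ℝ) = X + C 1 by simp, natDegree_X_add_C])]
        simp [show (X + 1 : Polynomial ℝ) = X + C 1 by simp, leadingCoeff_X_add_C])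
  rwa [hd] at this

lemma fwdDiff_eval (p : Polynomial ℝ) :
    Δ_[1] (fun x : ℝ => p.eval x) = fun x : ℝ => (p.comp (X + 1) - p).eval x := by
  funext x
  simp [fwdDiff, eval_comp]

lemma fwdDiff_poly_zero : ∀ (m : ℕ) (p : Polynomial ℝ), p.degree < m →
    (Δ_[(1:ℝ)])^[m] (fun x : ℝ => p.eval x) = fun _ => 0 := by
  intro m
  induction m with
  | zero =>
    intro p hp
    have : p = 0 := by simpa using hp
    simp [this]
  | succ m ih =>
    intro p hp
    rw [Function.iterate_succ_apply, fwdDiff_eval]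
    apply ih
    by_cases h0 : p = 0
    · simp [h0]
    · have h1 := degree_comp_sub p h0
      have h2 : p.degree ≤ (m : ℕ) := by
        exact_mod_cast Order.lt_succ_iff.mp (by exact_mod_cast hp)
      exact lt_of_lt_of_le h1 h2

lemma alt_sum_poly (m : ℕ) (p : Polynomial ℝ) (hp : p.degree < m) :
    ∑ k ∈ Finset.range (m + 1), (-1 : ℝ) ^ k * (m.choose k) * p.eval (k : ℝ) = 0 := by
  have h := fwdDiff_iter_eq_sum_shift (1:ℝ) (fun x : ℝ => p.eval x) m 0
  rw [fwdDiff_poly_zero m p hp] at h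
  have h' : (0:ℝ) = ∑ k ∈ range (m+1),
      ((-1:ℤ)^(m-k) * (m.choose k)) • p.eval ((0:ℝ) + k • (1:ℝ)) := h
  have key : ∑ k ∈ range (m+1), (-1:ℝ)^(m-k) * (m.choose k) * p.eval (k:ℝ) = 0 := by
    rw [show (0:ℝ) = ∑ k ∈ range (m+1),
      ((-1:ℤ)^(m-k) * (m.choose k)) • p.eval ((0:ℝ) + k • (1:ℝ)) from h']
    apply Finset.sum_congr rfl
    intro k hk
    simp [zsmul_eq_mul]
  have h2 := congrArg (fun x => (-1:ℝ)^m * x) key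
  simp only [mul_zero, Finset.mul_sum] at h2
  rw [← h2]
  apply Finset.sum_congr rfl
  intro k hk
  have hk' : k ≤ m := Nat.lt_succ_iff.mp (Finset.mem_range.mp hk)
  have : (-1:ℝ)^m = (-1)^k * (-1)^(m-k) := by
    rw [← pow_add, add_comm]
    rw [Nat.sub_add_cancel hk']
  rw [this]
  have hsq : ((-1:ℝ)^(m-k)) * ((-1:ℝ)^(m-k)) = 1 := by
    rw [← pow_add, ← two_mul, pow_mul]; norm_num
  linear_combination (-((-1:ℝ)^k * (m.choose k) * p.eval (k:ℝ))) * hsq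

theorem stmt_9 {H : Type*} [NormedAddCommGroup H] [InnerProductSpace ℂ H] [CompleteSpace H]
    (T : H →L[ℂ] H) (m : ℕ) (hm : 0 < m)
    (V : Set H) (hV : IsOpen V) (hne : V.Nonempty)
    (hpoly : ∀ h ∈ V, ∃ p : Polynomial ℝ, p.degree ≤ (m - 1 : ℕ) ∧
        ∀ n : ℕ, p.eval (n : ℝ) = ‖(T ^ n) h‖ ^ 2) :
    ∀ h : H, ∑ k ∈ Finset.range (m + 1),
        (-1 : ℝ) ^ k * (m.choose k) * ‖(T ^ k) h‖ ^ 2 = 0 := by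
  set F : H → ℝ := fun h => ∑ k ∈ Finset.range (m + 1),
      (-1 : ℝ) ^ k * (m.choose k) * ‖(T ^ k) h‖ ^ 2 with hF
  have hFV : ∀ h ∈ V, F h = 0 := by
    intro h hh
    obtain ⟨p, hdeg, hp⟩ := hpoly h hh
    have e : F h = ∑ k ∈ Finset.range (m + 1), (-1 : ℝ) ^ k * (m.choose k) * p.eval (k : ℝ) := by
      apply Finset.sum_congr rfl
      intro k _
      rw [hp k]
    rw [e]
    exact alt_sum_poly m p (lt_of_le_of_lt hdeg (by exact_mod_cast Nat.sub_lt hm one_pos))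
  have hpar : ∀ x y : H, F (x + y) + F (x - y) = 2 * F x + 2 * F y := by
    intro x y
    simp only [hF, Finset.mul_sum, ← Finset.sum_add_distrib]
    apply Finset.sum_congr rfl
    intro k _
    have hpl := parallelogram_law_with_norm ℂ ((T ^ k) x) ((T ^ k) y)
    rw [map_add, map_sub]
    simp only [pow_two]
    linear_combination ((-1 : ℝ) ^ k * (m.choose k)) * hpl
  have hsmul : ∀ (c : ℝ) (x : H), F ((c : ℂ) • x) = c ^ 2 * F x := by
    intro c x
    simp only [hF, Finset.mul_sum]
    apply Finset.sum_congr rfl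
    intro k _
    rw [map_smul, norm_smul]
    simp only [Complex.norm_real, Real.norm_eq_abs, mul_pow, sq_abs]
    ring
  obtain ⟨h₀, hh₀⟩ := hne
  obtain ⟨ε, hε, hball⟩ := Metric.isOpen_iff.mp hV h₀ hh₀
  have hsmall : ∀ x : H, ‖x‖ < ε → F x = 0 := by
    intro x hx
    have m1 : h₀ + x ∈ V := hball (by
      simp only [Metric.mem_ball, dist_eq_norm, add_sub_cancel_left]
      exact hx)
    have m2 : h₀ - x ∈ V := hball (by
      simp only [Metric.mem_ball, dist_eq_norm, sub_sub_cancel_left, norm_neg]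
      exact hx)
    have hp2 := hpar h₀ x
    rw [hFV _ m1, hFV _ m2, hFV _ hh₀] at hp2
    linarith
  intro h
  rcases eq_or_ne h 0 with rfl | hne0
  · simp [hF]
  · have hn : 0 < ‖h‖ := norm_pos_iff.mpr hne0
    set c : ℝ := ε / (2 * ‖h‖) with hc
    have hc0 : 0 < c := div_pos hε (by positivity)
    have hlt : ‖(c : ℂ) • h‖ < ε := by
      rw [norm_smul, Complex.norm_real, Real.norm_eq_abs, abs_of_pos hc0, hc]
      rw [div_mul_eq_mul_div]
      rw [div_lt_iff₀ (by positivity)]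
      nlinarith
    have h0 := hsmall _ hlt
    rw [hsmul] at h0
    have := mul_eq_zero.mp h0
    rcases this with h1 | h1
    · exact absurd h1 (by positivity)
    · exact h1
end

section
/- A bounded operator T on a Hilbert space H is an m-isometry for some m ∈ ℕ if and only if for every h ∈ H the sequence ‖T^n h‖² is a polynomial in n (with no degree constraint). -/
open Finset Function fwdDiff

/-- Iterated forward difference as explicit alternating sum, real coefficients. -/
private lemma fd_sum (f : ℕ → ℝ) (m n : ℕ) :
    (fwdDiff 1)^[m] f n = ∑ k ∈ range (m + 1), ((-1 : ℝ) ^ (m - k) * (m.choose k)) * f (n + k) := by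
  rw [fwdDiff_iter_eq_sum_shift]
  refine Finset.sum_congr rfl fun k _ => ?_
  have : k • (1 : ℕ) = k := by simp
  rw [this, zsmul_eq_mul]
  push_cast
  ring

/-- Relation between the statement's alternating sum and the iterated forward difference. -/
private lemma alt_sum_eq (f : ℕ → ℝ) (m n : ℕ) :
    ∑ k ∈ range (m + 1), (-1 : ℝ) ^ k * (m.choose k) * f (n + k)
      = (-1 : ℝ) ^ m * (fwdDiff 1)^[m] f n := by
  rw [fd_sum, Finset.mul_sum]
  refine Finset.sum_congr rfl fun k hk => ?_
  have hk' : k ≤ m := Nat.lt_succ_iff.mp (Finset.mem_range.mp hk)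
  have h1 : (-1 : ℝ) ^ m = (-1) ^ (m - k) * (-1) ^ k := by
    rw [← pow_add, Nat.sub_add_cancel hk']
  have h2 : (-1 : ℝ) ^ (m - k) * (-1 : ℝ) ^ (m - k) = 1 := by
    rw [← pow_add]; exact Even.neg_one_pow ⟨m - k, rfl⟩
  rw [h1]
  calc (-1 : ℝ) ^ k * (m.choose k) * f (n + k)
      = ((-1 : ℝ) ^ (m - k) * (-1 : ℝ) ^ (m - k)) * ((-1 : ℝ) ^ k * (m.choose k) * f (n + k)) := by
        rw [h2, one_mul]
    _ = (-1 : ℝ) ^ (m - k) * (-1 : ℝ) ^ k * ((-1 : ℝ) ^ (m - k) * ↑(m.choose k) * f (n + k)) := by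
        ring

private lemma fd_zero_fun (k : ℕ) : (fwdDiff 1)^[k] (fun _ : ℕ => (0 : ℝ)) = fun _ => 0 := by
  induction k with
  | zero => rfl
  | succ k ih => rw [Function.iterate_succ_apply, show (fwdDiff 1 fun _ : ℕ => (0:ℝ)) = fun _ => 0 from funext fun _ => sub_self 0, ih]

/-- Polynomial sequences have vanishing iterated differences beyond the degree. -/
private lemma poly_fd : ∀ (d : ℕ) (p : Polynomial ℝ), p.natDegree ≤ d →
    (fwdDiff 1)^[d + 1] (fun n : ℕ => p.eval (n : ℝ)) = fun _ => 0 := by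
  intro d
  induction d with
  | zero =>
    intro p hp
    obtain ⟨a, rfl⟩ := Polynomial.natDegree_eq_zero.mp (Nat.le_zero.mp hp)
    funext n
    simp [fwdDiff]
  | succ d ih =>
    intro p hp
    set q : Polynomial ℝ := p.comp (Polynomial.X + 1) - p with hq
    have hdq : q.natDegree ≤ d := by
      by_cases h0 : p.natDegree = 0
      · obtain ⟨a, rfl⟩ := Polynomial.natDegree_eq_zero.mp h0
        simp [hq]
      · have hp0 : p ≠ 0 := fun h => h0 (by simp [h])
        have hX : (Polynomial.X + 1 : Polynomial ℝ).natDegree = 1 := by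
          simpa using Polynomial.natDegree_X_add_C (1 : ℝ)
        have hlc : (p.comp (Polynomial.X + 1)).leadingCoeff = p.leadingCoeff := by
          rw [Polynomial.leadingCoeff_comp (by rw [hX]; exact one_ne_zero)]
          have : (Polynomial.X + 1 : Polynomial ℝ).leadingCoeff = 1 := by
            simpa using Polynomial.leadingCoeff_X_add_C (1 : ℝ)
          rw [this, one_pow, mul_one]
        have hcomp0 : p.comp (Polynomial.X + 1) ≠ 0 := by
          intro h
          apply hp0
          have := hlc
          rw [h, Polynomial.leadingCoeff_zero] at this
          exact Polynomial.leadingCoeff_eq_zero.mp this.symm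
        have hdeg : (p.comp (Polynomial.X + 1)).degree = p.degree := by
          rw [Polynomial.degree_eq_natDegree hcomp0, Polynomial.degree_eq_natDegree hp0,
            Polynomial.natDegree_comp, hX, mul_one]
        have hlt : q.degree < p.degree := hdeg ▸ Polynomial.degree_sub_lt hdeg hcomp0 hlc
        have : q.natDegree < p.natDegree := by
          by_cases hq0 : q = 0
          · rw [hq0]; simpa [Polynomial.natDegree_zero] using Nat.pos_of_ne_zero h0
          · exact Polynomial.natDegree_lt_natDegree hq0 hlt
        omega
    have hstep : (fwdDiff 1) (fun n : ℕ => p.eval (n : ℝ)) = fun n : ℕ => q.eval (n : ℝ) := by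
      funext n
      simp only [fwdDiff, hq, Polynomial.eval_sub, Polynomial.eval_comp, Polynomial.eval_add,
        Polynomial.eval_X, Polynomial.eval_one]
      push_cast
      ring
    rw [show d + 1 + 1 = d + 1 + 1 from rfl, Function.iterate_succ_apply, hstep, ih q hdq]

private lemma fd_ge_zero (f : ℕ → ℝ) (m : ℕ) (hm : ∀ n, (fwdDiff 1)^[m] f n = 0)
    (j : ℕ) (hj : m ≤ j) : ∀ n, (fwdDiff 1)^[j] f n = 0 := by
  intro n
  have : j = (j - m) + m := (Nat.sub_add_cancel hj).symm
  rw [this, Function.iterate_add_apply]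
  have : (fwdDiff 1)^[m] f = fun _ => (0 : ℝ) := funext hm
  rw [this, fd_zero_fun]

theorem stmt_10 {H : Type*} [NormedAddCommGroup H] [InnerProductSpace ℂ H] [CompleteSpace H]
    (T : H →L[ℂ] H) :
    (∃ m : ℕ, 0 < m ∧ ∀ h : H, ∑ k ∈ Finset.range (m + 1),
        (-1 : ℝ) ^ k * (m.choose k) * ‖(T ^ k) h‖ ^ 2 = 0) ↔
    (∀ h : H, ∃ p : Polynomial ℝ, ∀ n : ℕ, p.eval (n : ℝ) = ‖(T ^ n) h‖ ^ 2) := by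
  set f : H → ℕ → ℝ := fun h n => ‖(T ^ n) h‖ ^ 2 with hf
  have hshift : ∀ (h : H) (n k : ℕ), f h (n + k) = f (T ^ n <| h) k := by
    intro h n k
    simp only [hf]
    rw [add_comm, pow_add, ContinuousLinearMap.mul_apply]
  constructor
  · rintro ⟨m, hm, hQ⟩ h
    -- iterated differences of f h of order m vanish
    have hΔ : ∀ n, (fwdDiff 1)^[m] (f h) n = 0 := by
      intro n
      have h1 : ∑ k ∈ range (m + 1), (-1 : ℝ) ^ k * (m.choose k) * f h (n + k) = 0 := by
        have := hQ ((T ^ n) h)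
        rw [show (∑ k ∈ Finset.range (m + 1),
            (-1 : ℝ) ^ k * (m.choose k) * ‖(T ^ k) ((T ^ n) h)‖ ^ 2)
          = ∑ k ∈ range (m + 1), (-1 : ℝ) ^ k * (m.choose k) * f h (n + k) from
          Finset.sum_congr rfl fun k _ => by rw [hshift h n k]] at this
        exact this
      rw [alt_sum_eq] at h1
      rcases mul_eq_zero.mp h1 with h2 | h2
      · exact absurd h2 (pow_ne_zero _ (by norm_num))
      · exact h2
    -- Newton interpolation polynomial
    refine ⟨∑ j ∈ range m, Polynomial.C ((fwdDiff 1)^[j] (f h) 0 / (j.factorial : ℝ)) *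
      descPochhammer ℝ j, fun n => ?_⟩
    have heval : (∑ j ∈ range m, Polynomial.C ((fwdDiff 1)^[j] (f h) 0 / (j.factorial : ℝ)) *
        descPochhammer ℝ j).eval (n : ℝ)
        = ∑ j ∈ range m, (n.choose j : ℝ) * (fwdDiff 1)^[j] (f h) 0 := by
      rw [Polynomial.eval_finset_sum]
      refine Finset.sum_congr rfl fun j _ => ?_
      rw [Polynomial.eval_mul, Polynomial.eval_C, descPochhammer_eval_eq_descFactorial,
        Nat.descFactorial_eq_factorial_mul_choose]
      push_cast
      field_simp
    rw [heval]
    -- Gregory-Newton: f h n = ∑_{j ≤ n} choose n j • Δ^j f h 0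
    have hGN : f h n = ∑ j ∈ range (n + 1), (n.choose j : ℝ) * (fwdDiff 1)^[j] (f h) 0 := by
      have := shift_eq_sum_fwdDiff_iter 1 (f h) n 0
      simp only [smul_eq_mul, mul_one, zero_add, nsmul_eq_mul] at this
      exact this
    rw [show ‖(T ^ n) h‖ ^ 2 = f h n from rfl, hGN]
    -- both sums equal the sum over range (max m (n+1))
    set F : ℕ → ℝ := fun j => (n.choose j : ℝ) * (fwdDiff 1)^[j] (f h) 0 with hF
    have h1 : ∑ j ∈ range m, F j = ∑ j ∈ range (max m (n + 1)), F j := by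
      refine Finset.sum_subset (Finset.range_subset_range.mpr (le_max_left _ _)) fun j _ hj => ?_
      have : m ≤ j := by
        by_contra hc
        exact hj (Finset.mem_range.mpr (lt_of_not_ge hc))
      rw [hF]
      simp [fd_ge_zero (f h) m hΔ j this 0]
    have h2 : ∑ j ∈ range (n + 1), F j = ∑ j ∈ range (max m (n + 1)), F j := by
      refine Finset.sum_subset (Finset.range_subset_range.mpr (le_max_right _ _)) fun j _ hj => ?_
      have : n + 1 ≤ j := by
        by_contra hc
        exact hj (Finset.mem_range.mpr (lt_of_not_ge hc))
      rw [hF]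
      simp [Nat.choose_eq_zero_of_lt (by omega : n < j)]
    rw [h1, h2]
  · intro hp
    -- the closed sets
    set g : ℕ → Set H := fun m => {h | ∀ n, (fwdDiff 1)^[m] (f h) n = 0} with hg
    have hclosed : ∀ m, IsClosed (g m) := by
      intro m
      have : g m = ⋂ n : ℕ, {h : H | (fwdDiff 1)^[m] (f h) n = 0} := by
        ext h; simp [hg, Set.mem_iInter]
      rw [this]
      refine isClosed_iInter fun n => ?_
      have hc : Continuous fun h : H => (fwdDiff 1)^[m] (f h) n := by
        have : (fun h : H => (fwdDiff 1)^[m] (f h) n)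
            = fun h : H => ∑ k ∈ range (m + 1),
                ((-1 : ℝ) ^ (m - k) * (m.choose k)) * ‖(T ^ (n + k)) h‖ ^ 2 := by
          funext h
          rw [fd_sum]
        rw [this]
        refine continuous_finset_sum _ fun k _ => ?_
        exact continuous_const.mul (((T ^ (n + k)).continuous.norm).pow 2)
      exact isClosed_eq hc continuous_const
    have hcover : ⋃ m : ℕ, g m = Set.univ := by
      rw [Set.eq_univ_iff_forall]
      intro h
      obtain ⟨p, hph⟩ := hp h
      refine Set.mem_iUnion.mpr ⟨p.natDegree + 1, fun n => ?_⟩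
      have : f h = fun n : ℕ => p.eval (n : ℝ) := funext fun n => (hph n).symm
      rw [this, poly_fd p.natDegree p le_rfl]
    haveI : Nonempty H := ⟨0⟩
    obtain ⟨m, hmint⟩ := nonempty_interior_of_iUnion_of_closed hclosed hcover
    obtain ⟨h0, hh0⟩ := hmint
    obtain ⟨ε, hε, hball⟩ := Metric.mem_nhds_iff.mp (mem_interior_iff_mem_nhds.mp hh0)
    -- key: all of H is in g m
    have hall : ∀ h : H, h ∈ g m := by
      intro h
      intro n
      set t : ℝ := ε / (2 * (‖h‖ + 1)) with ht
      have hhn : (0:ℝ) < ‖h‖ + 1 := by positivity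
      have ht0 : 0 < t := by positivity
      have hmem : ∀ s : ℝ, |s| ≤ t → h0 + (s : ℂ) • h ∈ g m := by
        intro s hs
        apply hball
        rw [Metric.mem_ball, dist_eq_norm]
        have : h0 + (s : ℂ) • h - h0 = (s : ℂ) • h := by abel
        rw [this, norm_smul]
        have h1 : ‖(s : ℂ)‖ = |s| := by rw [Complex.norm_real, Real.norm_eq_abs]
        rw [h1]
        have h2 : |s| * ‖h‖ ≤ t * (‖h‖ + 1) := by
          have := norm_nonneg h
          nlinarith [abs_nonneg s]
        have h3 : t * (‖h‖ + 1) = ε / 2 := by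
          rw [ht]; field_simp
        linarith
      -- quadratic expansion
      set c : ℕ → ℝ := fun k => (-1 : ℝ) ^ (m - k) * (m.choose k) with hc
      set A : ℝ := ∑ k ∈ range (m + 1), c k * ‖(T ^ (n + k)) h0‖ ^ 2 with hA
      set B : ℝ := ∑ k ∈ range (m + 1),
        c k * (2 * Complex.re (inner ℂ ((T ^ (n + k)) h0) ((T ^ (n + k)) h))) with hB
      set E : ℝ := ∑ k ∈ range (m + 1), c k * ‖(T ^ (n + k)) h‖ ^ 2 with hE
      have hquad : ∀ s : ℝ, |s| ≤ t → A + s * B + s ^ 2 * E = 0 := by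
        intro s hs
        have hm1 := hmem s hs n
        rw [fd_sum] at hm1
        have hexp : ∀ k : ℕ, ‖(T ^ (n + k)) (h0 + (s : ℂ) • h)‖ ^ 2
            = ‖(T ^ (n + k)) h0‖ ^ 2
              + s * (2 * Complex.re (inner ℂ ((T ^ (n + k)) h0) ((T ^ (n + k)) h)))
              + s ^ 2 * ‖(T ^ (n + k)) h‖ ^ 2 := by
          intro k
          rw [map_add, map_smul]
          rw [@norm_add_sq ℂ _ _ _ _ ((T ^ (n + k)) h0) ((s : ℂ) • (T ^ (n + k)) h)]
          rw [inner_smul_right, norm_smul]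
          simp only [RCLike.re_to_complex, Complex.re_ofReal_mul, Complex.norm_real,
            Real.norm_eq_abs, mul_pow, sq_abs]
          ring
        have : ∑ k ∈ range (m + 1), c k * (f (h0 + (s : ℂ) • h)) (n + k)
            = A + s * B + s ^ 2 * E := by
          rw [hA, hB, hE, Finset.mul_sum, Finset.mul_sum, ← Finset.sum_add_distrib,
            ← Finset.sum_add_distrib]
          refine Finset.sum_congr rfl fun k _ => ?_
          simp only [hf]
          rw [hexp k]
          ring
        rw [show (∑ k ∈ range (m + 1),
            (-1:ℝ) ^ (m - k) * ↑(m.choose k) * f (h0 + (s : ℂ) • h) (n + k)) =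
            ∑ k ∈ range (m + 1), c k * (f (h0 + (s : ℂ) • h)) (n + k) from rfl, this] at hm1
        exact hm1
      have hq0 : A = 0 := by
        have := hquad 0 (by simpa using ht0.le)
        simpa using this
      have hqt := hquad t (by rw [abs_of_pos ht0])
      have hqmt := hquad (-t) (by rw [abs_neg, abs_of_pos ht0])
      have hE0 : E = 0 := by
        have h1 : t ^ 2 * E + t ^ 2 * E = 0 := by nlinarith [hqt, hqmt, hq0]
        have ht2 : t ^ 2 > 0 := by positivity
        nlinarith
      rw [fd_sum]
      exact hE0
    -- conclude with m' = max m 1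
    refine ⟨max m 1, lt_of_lt_of_le one_pos (le_max_right _ _), fun h => ?_⟩
    have hΔ : ∀ n, (fwdDiff 1)^[max m 1] (f h) n = 0 :=
      fd_ge_zero (f h) m (hall h) (max m 1) (le_max_left _ _)
    have := alt_sum_eq (f h) (max m 1) 0
    rw [hΔ 0, mul_zero] at this
    rw [show (∑ k ∈ Finset.range (max m 1 + 1),
        (-1:ℝ) ^ k * ((max m 1).choose k) * ‖(T ^ k) h‖ ^ 2)
      = ∑ k ∈ range (max m 1 + 1), (-1:ℝ) ^ k * ((max m 1).choose k) * f h (0 + k) from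
      Finset.sum_congr rfl fun k _ => by rw [zero_add]] 
    exact this
end

section
/- If T ∈ B(H) is a strict m-isometry with m ≥ 2, then the set F of vectors h ∈ H such that ‖T^n h‖² is a polynomial in n of degree at most m−2 is a closed, nowhere dense subset of H; equivalently, the set of h with ‖T^n h‖² a polynomial of degree exactly m−1 is open and dense. -/
open Finset Polynomial Function


lemma my_fwdDiff_iter_eq (M : ℕ) (a : ℕ → ℝ) (n : ℕ) :
    (fwdDiff 1)^[M] a n = (-1:ℝ)^M * ∑ k ∈ Finset.range (M+1),
      (-1:ℝ)^k * (M.choose k) * a (n+k) := by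
  rw [fwdDiff_iter_eq_sum_shift, Finset.mul_sum]
  refine Finset.sum_congr rfl fun k hk => ?_
  rw [Finset.mem_range, Nat.lt_succ_iff] at hk
  have h4 : (-1:ℝ)^k * (-1:ℝ)^k = 1 := by
    rw [← pow_add, ← two_mul, pow_mul]; norm_num
  have h2 : (-1:ℝ)^(M-k) = (-1)^M * (-1)^k := by
    have h3 : (-1:ℝ)^(M-k) * (-1:ℝ)^k = (-1)^M := by
      rw [← pow_add, Nat.sub_add_cancel hk]
    calc (-1:ℝ)^(M-k) = (-1)^(M-k) * ((-1)^k * (-1)^k) := by rw [h4, mul_one]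
    _ = (-1)^M * (-1)^k := by rw [← mul_assoc, h3]
  have : ((-1:ℤ)^(M-k) * (M.choose k) : ℤ) • a (n + k • 1) =
      ((-1:ℝ)^(M-k) * (M.choose k)) * a (n + k) := by
    rw [zsmul_eq_mul, smul_eq_mul, mul_one]; push_cast; ring
  rw [this, h2]; ring

lemma my_iter_zero (j : ℕ) : (fwdDiff 1)^[j] (fun _ => (0:ℝ) : ℕ → ℝ) = fun _ => 0 :=
  Function.iterate_fixed (fwdDiff_const 1 (0:ℝ)) j

lemma my_rep (M : ℕ) (a : ℕ → ℝ) (hM : ∀ n, (fwdDiff 1)^[M] a n = 0) (n : ℕ) :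
    a n = ∑ j ∈ Finset.range M, (fwdDiff 1)^[j] a 0 * (n.choose j : ℝ) := by
  have hzero : ∀ j, M ≤ j → (fwdDiff 1)^[j] a 0 = 0 := by
    intro j hj
    have h1 : (fwdDiff 1)^[j] a = (fwdDiff 1)^[j - M] ((fwdDiff 1)^[M] a) := by
      rw [← Function.iterate_add_apply, Nat.sub_add_cancel hj]
    have h2 : (fwdDiff 1)^[M] a = fun _ => (0:ℝ) := funext hM
    rw [h1, h2, my_iter_zero]
  have key := shift_eq_sum_fwdDiff_iter (1:ℕ) a n 0
  simp only [zero_add, smul_eq_mul, mul_one, nsmul_eq_mul] at key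
  rw [key]
  set f : ℕ → ℝ := fun k => (n.choose k : ℝ) * (fwdDiff 1)^[k] a 0 with hf
  have e1 : ∑ k ∈ Finset.range (n+1), (n.choose k : ℝ) * (fwdDiff 1)^[k] a 0
      = ∑ k ∈ Finset.range (max (n+1) M), f k := by
    refine Finset.sum_subset (Finset.range_subset_range.2 (le_max_left _ _)) ?_
    intro k _ hk
    rw [Finset.mem_range, not_lt, Nat.succ_le_iff] at hk
    simp [hf, Nat.choose_eq_zero_of_lt hk]
  have e2 : ∑ j ∈ Finset.range M, f j
      = ∑ k ∈ Finset.range (max (n+1) M), f k := by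
    refine Finset.sum_subset (Finset.range_subset_range.2 (le_max_right _ _)) ?_
    intro k _ hk
    rw [Finset.mem_range, not_lt] at hk
    simp [hf, hzero k hk]
  rw [e1, ← e2]
  exact Finset.sum_congr rfl fun j _ => mul_comm _ _

lemma my_const_zero (b : ℕ → ℝ) (hb : ∀ n, fwdDiff 1 b n = 0) (h0 : b 0 = 0) :
    ∀ n, b n = 0 := by
  intro n
  induction n with
  | zero => exact h0
  | succ n ih =>
    have := hb n
    rw [fwdDiff] at this
    linarith


noncomputable def myNewtonPoly (c : ℕ → ℝ) (d : ℕ) : Polynomial ℝ :=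
  ∑ j ∈ Finset.range (d+1), Polynomial.C (c j / (Nat.factorial j)) * descPochhammer ℝ j

lemma myNewtonPoly_eval (c : ℕ → ℝ) (d n : ℕ) :
    (myNewtonPoly c d).eval (n : ℝ) = ∑ j ∈ Finset.range (d+1), c j * (n.choose j : ℝ) := by
  rw [myNewtonPoly, Polynomial.eval_finset_sum]
  refine Finset.sum_congr rfl fun j _ => ?_
  rw [Polynomial.eval_mul, Polynomial.eval_C, descPochhammer_eval_eq_descFactorial,
    Nat.descFactorial_eq_factorial_mul_choose]
  have hf : ((Nat.factorial j) : ℝ) ≠ 0 := Nat.cast_ne_zero.2 (Nat.factorial_ne_zero j)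
  push_cast
  field_simp

lemma myNewtonPoly_degree (c : ℕ → ℝ) (d : ℕ) : (myNewtonPoly c d).degree ≤ (d : ℕ) := by
  refine (Polynomial.degree_sum_le _ _).trans (Finset.sup_le fun j hj => ?_)
  refine (Polynomial.degree_mul_le _ _).trans ?_
  have h2 : (descPochhammer ℝ j).degree ≤ (j : WithBot ℕ) := by
    refine Polynomial.degree_le_natDegree.trans ?_
    rw [descPochhammer_natDegree]
  calc (Polynomial.C (c j / (Nat.factorial j))).degree + (descPochhammer ℝ j).degree
      ≤ 0 + (j : WithBot ℕ) := add_le_add Polynomial.degree_C_le h2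
    _ = (j : WithBot ℕ) := zero_add _
    _ ≤ (d : WithBot ℕ) := by
        exact_mod_cast Nat.lt_succ_iff.1 (Finset.mem_range.1 hj)

lemma myNewtonPoly_coeff (c : ℕ → ℝ) (d : ℕ) : (myNewtonPoly c d).coeff d = c d / (Nat.factorial d) := by
  rw [myNewtonPoly, Polynomial.finset_sum_coeff]
  rw [Finset.sum_eq_single_of_mem d (Finset.self_mem_range_succ d)]
  · rw [Polynomial.coeff_C_mul]
    have hm := monic_descPochhammer ℝ d
    have : (descPochhammer ℝ d).coeff d = 1 := by
      have := hm.coeff_natDegree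
      rwa [descPochhammer_natDegree] at this
    rw [this, mul_one]
  · intro j hj hne
    rw [Polynomial.coeff_C_mul, Polynomial.coeff_eq_zero_of_natDegree_lt, mul_zero]
    rw [descPochhammer_natDegree]
    exact lt_of_le_of_ne (Nat.lt_succ_iff.1 (Finset.mem_range.1 hj)) hne

lemma my_poly_eq (p q : Polynomial ℝ) (h : ∀ n : ℕ, p.eval (n:ℝ) = q.eval (n:ℝ)) : p = q := by
  have h1 : (p - q) = 0 := by
    refine Polynomial.eq_zero_of_infinite_isRoot _ ?_
    refine Set.Infinite.mono (s := Set.range ((↑·) : ℕ → ℝ)) ?_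
      (Set.infinite_range_of_injective Nat.cast_injective)
    rintro x ⟨n, rfl⟩
    simp [Polynomial.IsRoot, h n]
  exact sub_eq_zero.1 h1


section
variable {H : Type*} [NormedAddCommGroup H] [InnerProductSpace ℂ H]

lemma my_key (T : H →L[ℂ] H) (m : ℕ) (hm : 2 ≤ m)
    (hiso : ∀ h : H, ∑ k ∈ Finset.range (m + 1),
        (-1 : ℝ) ^ k * (m.choose k) * ‖(T ^ k) h‖ ^ 2 = 0) (h : H) :
    ((∃ p : Polynomial ℝ, p.degree ≤ (m - 2 : ℕ) ∧
        ∀ n : ℕ, p.eval (n : ℝ) = ‖(T ^ n) h‖ ^ 2) ↔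
      (∑ k ∈ Finset.range m, (-1:ℝ)^k * ((m-1).choose k) * ‖(T ^ k) h‖ ^ 2) = 0) ∧
    ((∃ p : Polynomial ℝ, p.degree = (m - 1 : ℕ) ∧
        ∀ n : ℕ, p.eval (n : ℝ) = ‖(T ^ n) h‖ ^ 2) ↔
      (∑ k ∈ Finset.range m, (-1:ℝ)^k * ((m-1).choose k) * ‖(T ^ k) h‖ ^ 2) ≠ 0) := by
  have hm1 : m - 1 + 1 = m := by omega
  have hm2 : m - 2 + 1 = m - 1 := by omega
  set a : ℕ → ℝ := fun n => ‖(T ^ n) h‖ ^ 2 with ha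
  set S : ℝ := ∑ k ∈ Finset.range m, (-1:ℝ)^k * ((m-1).choose k) * ‖(T ^ k) h‖ ^ 2 with hSdef
  have hDm : ∀ n, (fwdDiff 1)^[m] a n = 0 := by
    intro n
    rw [my_fwdDiff_iter_eq]
    have h2 : ∑ k ∈ Finset.range (m+1), (-1:ℝ)^k * (m.choose k) * a (n+k)
        = ∑ k ∈ Finset.range (m+1), (-1:ℝ)^k * (m.choose k) * ‖(T ^ k) ((T ^ n) h)‖ ^ 2 := by
      refine Finset.sum_congr rfl fun k _ => ?_
      have hck : (T ^ k) ((T ^ n) h) = (T ^ (n+k)) h := by rw [add_comm n k, pow_add]; rfl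
      rw [hck, ha]
    rw [h2, hiso ((T ^ n) h), mul_zero]
  have hQval : (fwdDiff 1)^[m-1] a 0 = (-1:ℝ)^(m-1) * S := by
    rw [my_fwdDiff_iter_eq]
    congr 1
    rw [hSdef, ← hm1]
    exact Finset.sum_congr rfl fun k _ => by rw [zero_add]
  have hsign : ((-1:ℝ)^(m-1)) ≠ 0 := pow_ne_zero _ (by norm_num)
  have hfac : ((Nat.factorial (m-1)) : ℝ) ≠ 0 := Nat.cast_ne_zero.2 (Nat.factorial_ne_zero _)
  have hqeval : ∀ n : ℕ,
      (myNewtonPoly (fun j => (fwdDiff 1)^[j] a 0) (m-1)).eval (n:ℝ) = a n := by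
    intro n
    rw [myNewtonPoly_eval, hm1, my_rep m a hDm n]
  have iff1 : (∃ p : Polynomial ℝ, p.degree ≤ (m - 2 : ℕ) ∧
      ∀ n : ℕ, p.eval (n : ℝ) = ‖(T ^ n) h‖ ^ 2) ↔ S = 0 := by
    constructor
    · rintro ⟨p, hdeg, heval⟩
      have hpq : p = myNewtonPoly (fun j => (fwdDiff 1)^[j] a 0) (m-1) :=
        my_poly_eq _ _ (fun n => by rw [heval n]; exact (hqeval n).symm)
      have hco : p.coeff (m-1) = 0 :=
        Polynomial.coeff_eq_zero_of_degree_lt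
          (lt_of_le_of_lt hdeg (by exact_mod_cast (by omega : m-2 < m-1)))
      rw [hpq, myNewtonPoly_coeff] at hco
      have hc0 : (fwdDiff 1)^[m-1] a 0 = 0 := (div_eq_zero_iff.mp hco).resolve_right hfac
      have hz : (-1:ℝ)^(m-1) * S = 0 := by rw [← hQval, hc0]
      exact (mul_eq_zero.mp hz).resolve_left hsign
    · intro hSzero
      have hc0 : (fwdDiff 1)^[m-1] a 0 = 0 := by rw [hQval, hSzero, mul_zero]
      have hall : ∀ n, (fwdDiff 1)^[m-1] a n = 0 := by
        refine my_const_zero _ (fun n => ?_) hc0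
        have hx := hDm n
        rwa [show m = (m-1)+1 from hm1.symm, Function.iterate_succ_apply'] at hx
      refine ⟨myNewtonPoly (fun j => (fwdDiff 1)^[j] a 0) (m-2),
        myNewtonPoly_degree _ _, fun n => ?_⟩
      rw [myNewtonPoly_eval, hm2]
      exact (my_rep (m-1) a hall n).symm
  refine ⟨iff1, ?_, ?_⟩
  · rintro ⟨p, hdeg, heval⟩ hSzero
    obtain ⟨p', hdeg', heval'⟩ := iff1.mpr hSzero
    have hpp : p = p' := my_poly_eq _ _ (fun n => by rw [heval n, heval' n])
    rw [hpp] at hdeg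
    rw [hdeg] at hdeg'
    exact absurd hdeg' (by exact_mod_cast (by omega : ¬ (m-1 ≤ m-2)))
  · intro hSne
    refine ⟨myNewtonPoly (fun j => (fwdDiff 1)^[j] a 0) (m-1), ?_, fun n => hqeval n⟩
    refine le_antisymm (myNewtonPoly_degree _ _) (Polynomial.le_degree_of_ne_zero ?_)
    rw [myNewtonPoly_coeff]
    refine div_ne_zero ?_ hfac
    rw [hQval]
    exact mul_ne_zero hsign hSne

end

theorem stmt_11 {H : Type*} [NormedAddCommGroup H] [InnerProductSpace ℂ H] [CompleteSpace H]
    (T : H →L[ℂ] H) (m : ℕ) (hm : 2 ≤ m)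
    (hiso : ∀ h : H, ∑ k ∈ Finset.range (m + 1),
        (-1 : ℝ) ^ k * (m.choose k) * ‖(T ^ k) h‖ ^ 2 = 0)
    (hstrict : ¬ ∀ h : H, ∑ k ∈ Finset.range m,
        (-1 : ℝ) ^ k * ((m - 1).choose k) * ‖(T ^ k) h‖ ^ 2 = 0) :
    IsClosed {h : H | ∃ p : Polynomial ℝ, p.degree ≤ (m - 2 : ℕ) ∧
        ∀ n : ℕ, p.eval (n : ℝ) = ‖(T ^ n) h‖ ^ 2} ∧
    interior (closure {h : H | ∃ p : Polynomial ℝ, p.degree ≤ (m - 2 : ℕ) ∧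
        ∀ n : ℕ, p.eval (n : ℝ) = ‖(T ^ n) h‖ ^ 2}) = ∅ ∧
    IsOpen {h : H | ∃ p : Polynomial ℝ, p.degree = (m - 1 : ℕ) ∧
        ∀ n : ℕ, p.eval (n : ℝ) = ‖(T ^ n) h‖ ^ 2} ∧
    Dense {h : H | ∃ p : Polynomial ℝ, p.degree = (m - 1 : ℕ) ∧
        ∀ n : ℕ, p.eval (n : ℝ) = ‖(T ^ n) h‖ ^ 2} := by
  have hkey := my_key T m hm hiso
  set Q : H → ℝ := fun v => ∑ k ∈ Finset.range m,
    (-1:ℝ)^k * ((m-1).choose k) * ‖(T ^ k) v‖ ^ 2 with hQdef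
  have hFeq : {h : H | ∃ p : Polynomial ℝ, p.degree ≤ (m - 2 : ℕ) ∧
      ∀ n : ℕ, p.eval (n : ℝ) = ‖(T ^ n) h‖ ^ 2} = Q ⁻¹' {0} := by
    ext h
    simpa [hQdef] using (hkey h).1
  have hGeq : {h : H | ∃ p : Polynomial ℝ, p.degree = (m - 1 : ℕ) ∧
      ∀ n : ℕ, p.eval (n : ℝ) = ‖(T ^ n) h‖ ^ 2} = Q ⁻¹' {0}ᶜ := by
    ext h
    simpa [hQdef] using (hkey h).2
  have hcont : Continuous Q := by
    rw [hQdef]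
    exact continuous_finset_sum _ fun k _ =>
      continuous_const.mul (((T ^ k).continuous.norm).pow 2)
  have hclosed : IsClosed (Q ⁻¹' {0} : Set H) := isClosed_singleton.preimage hcont
  -- interior empty
  have hint : interior (Q ⁻¹' {0} : Set H) = ∅ := by
    by_contra hne
    obtain ⟨x, hx⟩ := Set.nonempty_iff_ne_empty.2 hne
    obtain ⟨ε, hε, hball⟩ := Metric.isOpen_iff.mp isOpen_interior x hx
    have hball' : Metric.ball x ε ⊆ Q ⁻¹' {0} := hball.trans interior_subset
    have hQx : Q x = 0 := hball' (Metric.mem_ball_self hε)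
    apply hstrict
    intro v
    show Q v = 0
    rcases eq_or_ne v 0 with rfl | hv
    · simp [hQdef]
    · have hvn : (0:ℝ) < ‖v‖ := norm_pos_iff.2 hv
      set δ : ℝ := ε / (2 * ‖v‖) with hδ
      have hδpos : 0 < δ := div_pos hε (by positivity)
      set w : H := (δ:ℂ) • v with hw
      have hwn : ‖w‖ = δ * ‖v‖ := by
        rw [hw, norm_smul, Complex.norm_real, Real.norm_eq_abs, abs_of_pos hδpos]
      have hwe : ‖w‖ < ε := by
        rw [hwn, hδ]
        rw [div_mul_eq_mul_div]
        rw [mul_comm (2:ℝ) ‖v‖, ← div_div, mul_div_assoc, div_self hvn.ne', mul_one]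
        linarith
      have h1 : Q (x + w) = 0 := by
        refine hball' ?_
        rw [Metric.mem_ball, dist_self_add_left]
        exact hwe
      have h2 : Q (x - w) = 0 := by
        refine hball' ?_
        rw [Metric.mem_ball, dist_self_sub_left]
        exact hwe
      have hpar : ∀ y z : H, Q (y+z) + Q (y-z) = 2*Q y + 2*Q z := by
        intro y z
        rw [hQdef]
        simp only
        rw [← Finset.sum_add_distrib, Finset.mul_sum, Finset.mul_sum, ← Finset.sum_add_distrib]
        refine Finset.sum_congr rfl fun k _ => ?_
        have hp := parallelogram_law_with_norm ℂ ((T ^ k) y) ((T ^ k) z)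
        have hma : (T ^ k) (y+z) = (T ^ k) y + (T ^ k) z := map_add _ _ _
        have hms : (T ^ k) (y-z) = (T ^ k) y - (T ^ k) z := map_sub _ _ _
        rw [hma, hms]
        linear_combination ((-1:ℝ)^k * (((m-1).choose k) : ℝ)) * hp
      have hQw : Q w = 0 := by
        have := hpar x w
        rw [h1, h2, hQx] at this
        linarith
      have hscale : Q w = δ^2 * Q v := by
        rw [hQdef]
        simp only
        rw [Finset.mul_sum]
        refine Finset.sum_congr rfl fun k _ => ?_
        have hmsm : (T ^ k) w = (δ:ℂ) • (T ^ k) v := by rw [hw]; exact map_smul _ _ _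
        rw [hmsm, norm_smul, Complex.norm_real, Real.norm_eq_abs, abs_of_pos hδpos]
        ring
      have : δ^2 * Q v = 0 := by rw [← hscale, hQw]
      exact (mul_eq_zero.mp this).resolve_left (pow_ne_zero 2 hδpos.ne')
  have hcompl : {h : H | ∃ p : Polynomial ℝ, p.degree = (m - 1 : ℕ) ∧
      ∀ n : ℕ, p.eval (n : ℝ) = ‖(T ^ n) h‖ ^ 2}
      = ({h : H | ∃ p : Polynomial ℝ, p.degree ≤ (m - 2 : ℕ) ∧
      ∀ n : ℕ, p.eval (n : ℝ) = ‖(T ^ n) h‖ ^ 2})ᶜ := by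
    rw [hFeq, hGeq, Set.preimage_compl]
  refine ⟨hFeq ▸ hclosed, ?_, ?_, ?_⟩
  · rw [hFeq, hclosed.closure_eq, hint]
  · rw [hGeq, Set.preimage_compl]
    exact hclosed.isOpen_compl
  · rw [hcompl]
    refine interior_eq_empty_iff_dense_compl.mp ?_
    rw [hFeq, hint]
end

section
/- Let M be a complex inner product space, A : M → M a linear m-isometry, and N : M → M a nilpotent linear operator with index of nilpotency ν commuting with A. Then A + N is an (m + 2(ν−1))-isometry. -/
open Finset Function
open scoped fwdDiff

namespace Stmt12Aux

local notation "D" => fwdDiff (1 : ℕ)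

lemma iterD_zero (n : ℕ) : D^[n] (0 : ℕ → ℂ) = 0 := by
  induction n with
  | zero => rfl
  | succ n ih =>
    rw [Function.iterate_succ_apply, show D (0 : ℕ → ℂ) = 0 from funext fun k => sub_self _, ih]

lemma iterD_fun_zero (n : ℕ) (k : ℕ) : D^[n] (fun _ => (0 : ℂ)) k = 0 := by
  have : (fun _ => (0 : ℂ)) = (0 : ℕ → ℂ) := rfl
  rw [this, iterD_zero]; rfl

lemma iterD_shift (n : ℕ) (f : ℕ → ℂ) (y : ℕ) :
    D^[n] (fun k => f (k + 1)) y = D^[n] f (y + 1) := by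
  induction n generalizing f y with
  | zero => rfl
  | succ n ih =>
    rw [Function.iterate_succ_apply, Function.iterate_succ_apply]
    rw [show D (fun k => f (k + 1)) = fun k => (D f) (k + 1) from funext fun k => rfl]
    exact ih _ _

lemma iterD_add (n : ℕ) (f g : ℕ → ℂ) :
    D^[n] (fun k => f k + g k) = fun k => D^[n] f k + D^[n] g k := by
  have := fwdDiff_iter_add (1 : ℕ) f g n
  simpa [Pi.add_def] using this

lemma iterD_const_mul (n : ℕ) (c : ℂ) (f : ℕ → ℂ) :
    D^[n] (fun k => c * f k) = fun k => c * D^[n] f k := by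
  have := fwdDiff_iter_const_smul (1 : ℕ) c f n
  simpa [Pi.smul_def, smul_eq_mul] using this

/-- alternating sum = (-1)^n * iterated forward difference -/
lemma alt_sum_eq (n : ℕ) (f : ℕ → ℂ) (y : ℕ) :
    ∑ k ∈ range (n + 1), (-1 : ℂ) ^ k * (n.choose k) * f (y + k)
      = (-1) ^ n * D^[n] f y := by
  rw [fwdDiff_iter_eq_sum_shift, Finset.mul_sum]
  refine Finset.sum_congr rfl fun k hk => ?_
  have hk' : k ≤ n := Nat.lt_succ_iff.mp (Finset.mem_range.mp hk)
  have : ((-1 : ℤ) ^ (n - k) * (n.choose k : ℤ)) • f (y + k • 1)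
      = (-1 : ℂ) ^ (n - k) * (n.choose k) * f (y + k) := by
    push_cast [zsmul_eq_mul, smul_eq_mul, mul_one]
    ring
  rw [this]
  have hpow : (-1 : ℂ) ^ n * (-1) ^ (n - k) = (-1) ^ k := by
    rw [← pow_add]
    have h2 : n + (n - k) = 2 * (n - k) + k := by omega
    rw [h2, pow_add, pow_mul]
    simp
  rw [← mul_assoc, ← mul_assoc, hpow]

lemma V_succ {m : ℕ} {f : ℕ → ℂ} (hf : ∀ k, D^[m] f k = 0) :
    ∀ k, D^[m + 1] f k = 0 := by
  intro k
  rw [Function.iterate_succ_apply']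
  show D^[m] f (k + 1) - D^[m] f k = 0
  rw [hf, hf, sub_zero]

lemma V_mono {m m' : ℕ} (h : m ≤ m') {f : ℕ → ℂ} (hf : ∀ k, D^[m] f k = 0) :
    ∀ k, D^[m'] f k = 0 := by
  obtain ⟨j, rfl⟩ := Nat.exists_eq_add_of_le h
  clear h
  induction j with
  | zero => exact hf
  | succ j ih => exact fun k => V_succ ih k

lemma V_mul (a : ℂ) : ∀ (m : ℕ) (f : ℕ → ℂ), (∀ k, D^[m] f k = 0) →
    ∀ k, D^[m + 1] (fun k => ((k : ℂ) - a) * f k) k = 0 := by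
  intro m
  induction m with
  | zero =>
    intro f hf k
    have : f = 0 := funext fun k => hf k
    subst this
    simpa using congrFun (iterD_zero 1) k
  | succ m ih =>
    intro f hf k
    have hD : D (fun k => ((k : ℂ) - a) * f k)
        = fun (k : ℕ) => (((k : ℂ) - a) * (D f) k + f (k + 1)) := by
      funext k
      show ((k + 1 : ℕ) - a) * f (k + 1) - ((k : ℂ) - a) * f k
        = ((k : ℂ) - a) * (f (k + 1) - f k) + f (k + 1)
      push_cast
      ring
    rw [show m + 1 + 1 = (m + 1) + 1 from rfl, Function.iterate_succ_apply, hD,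
      iterD_add]
    have h1 : ∀ k, D^[m + 1] (fun k => ((k : ℂ) - a) * (D f) k) k = 0 := by
      refine ih (D f) fun k => ?_
      rw [← Function.iterate_succ_apply]
      exact hf k
    have h2 : ∀ k, D^[m + 1] (fun k => f (k + 1)) k = 0 := by
      intro k
      rw [iterD_shift]
      exact hf _
    simp only [h1, h2, add_zero]

lemma V_choose : ∀ (d m : ℕ) (f : ℕ → ℂ), (∀ k, D^[m] f k = 0) →
    ∀ k, D^[m + d] (fun k => (k.choose d : ℂ) * f (k - d)) k = 0 := by
  intro d
  induction d with
  | zero =>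
    intro m f hf k
    simpa using hf k
  | succ d ihd =>
    intro m
    induction m with
    | zero =>
      intro f hf k
      have : f = 0 := funext fun k => hf k
      subst this
      simpa using iterD_fun_zero (0 + (d+1)) k
    | succ m ihm =>
      intro f hf k
      have hD : D (fun k => (k.choose (d+1) : ℂ) * f (k - (d+1)))
          = fun (k : ℕ) => ((k.choose (d+1) : ℂ) * (D f) (k - (d+1))
              + (k.choose d : ℂ) * f (k - d) : ℂ) := by
        funext k
        show ((k+1).choose (d+1) : ℂ) * f (k + 1 - (d+1)) - (k.choose (d+1) : ℂ) * f (k - (d+1))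
          = (k.choose (d+1) : ℂ) * (f (k - (d+1) + 1) - f (k - (d+1)))
              + (k.choose d : ℂ) * f (k - d)
        have hp : (k+1).choose (d+1) = k.choose d + k.choose (d+1) := Nat.choose_succ_succ k d
        have hs : k + 1 - (d + 1) = k - d := by omega
        rw [hp, hs]
        push_cast
        rcases le_or_gt (d + 1) k with hdk | hdk
        · have : k - d = k - (d + 1) + 1 := by omega
          rw [this]; ring
        · have : (k.choose (d+1) : ℂ) = 0 := by
            exact_mod_cast congrArg (Nat.cast (R := ℂ)) (Nat.choose_eq_zero_of_lt hdk)
          rw [this]; ring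
      have hstep : m + 1 + (d + 1) = (m + (d + 1)) + 1 := by ring
      rw [hstep, Function.iterate_succ_apply, hD, iterD_add]
      have h1 : ∀ k, D^[m + (d+1)] (fun k => (k.choose (d+1) : ℂ) * (D f) (k - (d+1))) k = 0 := by
        refine ihm (D f) fun k => ?_
        rw [← Function.iterate_succ_apply]
        exact hf k
      have h2 : ∀ k, D^[m + (d+1)] (fun k => (k.choose d : ℂ) * f (k - d)) k = 0 := by
        have := ihd (m + 1) f hf
        exact fun k => (show m + (d + 1) = (m + 1) + d by ring) ▸ this k
      simp only [h1, h2, add_zero]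

lemma V_prod : ∀ (e m : ℕ) (f : ℕ → ℂ), (∀ k, D^[m] f k = 0) →
    ∀ k, D^[m + e] (fun k => (∏ t ∈ range e, ((k : ℂ) - t)) * f k) k = 0 := by
  intro e
  induction e with
  | zero => intro m f hf k; simpa using hf k
  | succ e ih =>
    intro m f hf k
    have hfun : (fun (k : ℕ) => (∏ t ∈ range (e+1), ((k : ℂ) - t)) * f k)
        = fun (k : ℕ) => ((k : ℂ) - e) * ((∏ t ∈ range e, ((k : ℂ) - t)) * f k) := by
      funext k
      rw [Finset.prod_range_succ]
      ring
    rw [show m + (e + 1) = (m + e) + 1 by ring, hfun]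
    exact V_mul (e : ℂ) (m + e) _ (ih m f hf) k

lemma cast_choose_prod (k e : ℕ) :
    (e.factorial : ℂ) * (k.choose e : ℂ) = ∏ t ∈ range e, ((k : ℂ) - t) := by
  rcases lt_or_ge k e with hke | hke
  · rw [Nat.choose_eq_zero_of_lt hke, Nat.cast_zero, mul_zero]
    exact (Finset.prod_eq_zero (Finset.mem_range.mpr hke) (by simp)).symm
  · have h1 : (k.descFactorial e : ℂ) = (e.factorial : ℂ) * (k.choose e : ℂ) := by
      rw [Nat.descFactorial_eq_factorial_mul_choose]; push_cast; ring
    rw [← h1, Nat.descFactorial_eq_prod_range, Nat.cast_prod]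
    refine Finset.prod_congr rfl fun t ht => ?_
    have : t ≤ k := le_trans (Nat.le_of_lt (Finset.mem_range.mp ht)) hke
    push_cast [Nat.cast_sub this]
    ring

section Main

variable {M : Type*} [NormedAddCommGroup M] [InnerProductSpace ℂ M]

local notation "⟪" x ", " y "⟫" => @inner ℂ _ _ x y

/-- Polarized m-isometry identity. -/
lemma polarize (A : M →ₗ[ℂ] M) (m : ℕ)
    (hA : ∀ h : M, ∑ k ∈ Finset.range (m + 1),
        (-1 : ℝ) ^ k * (m.choose k) * ‖(A ^ k) h‖ ^ 2 = 0) :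
    ∀ u v : M, ∑ l ∈ range (m + 1),
      (-1 : ℂ) ^ l * (m.choose l) * ⟪(A ^ l) u, (A ^ l) v⟫ = 0 := by
  set S : M → M → ℂ := fun u v => ∑ l ∈ range (m + 1),
      (-1 : ℂ) ^ l * (m.choose l) * ⟪(A ^ l) u, (A ^ l) v⟫ with hSdef
  have hS0 : ∀ w : M, S w w = 0 := by
    intro w
    have h2 : ((∑ k ∈ range (m + 1), (-1 : ℝ) ^ k * (m.choose k) * ‖(A ^ k) w‖ ^ 2 : ℝ) : ℂ)
        = 0 := by rw [hA w]; norm_num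
    rw [hSdef]
    rw [← h2]
    push_cast
    refine Finset.sum_congr rfl fun l _ => ?_
    rw [inner_self_eq_norm_sq_to_K,
      show ((‖(A ^ l) w‖ : ℝ) : ℂ) = @RCLike.ofReal ℂ _ ‖(A ^ l) w‖ from rfl]
  have expand : ∀ u v : M, S (u + v) (u + v) = S u u + (S u v + S v u) + S v v := by
    intro u v
    simp only [hSdef, map_add, inner_add_add_self, mul_add]
    rw [Finset.sum_add_distrib, Finset.sum_add_distrib, Finset.sum_add_distrib]
    ring
  have expandI : ∀ u v : M, S (u + Complex.I • v) (u + Complex.I • v)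
      = S u u + (Complex.I * S u v - Complex.I * S v u) + S v v := by
    intro u v
    calc S (u + Complex.I • v) (u + Complex.I • v)
        = ∑ l ∈ range (m + 1), ((-1 : ℂ) ^ l * (m.choose l) * ⟪(A ^ l) u, (A ^ l) u⟫
            + (Complex.I * ((-1 : ℂ) ^ l * (m.choose l) * ⟪(A ^ l) u, (A ^ l) v⟫)
              - Complex.I * ((-1 : ℂ) ^ l * (m.choose l) * ⟪(A ^ l) v, (A ^ l) u⟫))
            + (-1 : ℂ) ^ l * (m.choose l) * ⟪(A ^ l) v, (A ^ l) v⟫) := by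
          rw [hSdef]
          refine Finset.sum_congr rfl fun l _ => ?_
          simp only [map_add, map_smul, inner_add_add_self, inner_smul_left,
            inner_smul_right, Complex.conj_I]
          linear_combination (-((-1 : ℂ) ^ l * (m.choose l) *
            ⟪(A ^ l) v, (A ^ l) v⟫)) * Complex.I_sq
      _ = S u u + (Complex.I * S u v - Complex.I * S v u) + S v v := by
          rw [hSdef]
          simp only [Finset.sum_add_distrib, Finset.sum_sub_distrib, ← Finset.mul_sum]
  intro u v
  have k1 : S u v + S v u = 0 := by
    have := expand u v
    rw [hS0, hS0, hS0] at this
    linear_combination -this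
  have k2 : S u v - S v u = 0 := by
    have := expandI u v
    rw [hS0, hS0, hS0] at this
    have h3 : Complex.I * (S u v - S v u) = 0 := by linear_combination -this
    rcases mul_eq_zero.mp h3 with h | h
    · exact absurd h Complex.I_ne_zero
    · exact h
  show S u v = 0
  linear_combination (k1 + k2) / 2

lemma V_inner (A : M →ₗ[ℂ] M) (m : ℕ)
    (hA : ∀ h : M, ∑ k ∈ Finset.range (m + 1),
        (-1 : ℝ) ^ k * (m.choose k) * ‖(A ^ k) h‖ ^ 2 = 0) (u v : M) :
    ∀ k, (fwdDiff 1)^[m] (fun l => (⟪(A ^ l) u, (A ^ l) v⟫ : ℂ)) k = 0 := by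
  intro k
  have halt := alt_sum_eq m (fun l => (⟪(A ^ l) u, (A ^ l) v⟫ : ℂ)) k
  have hsum : ∑ l ∈ range (m + 1), (-1 : ℂ) ^ l * (m.choose l) *
      ⟪(A ^ (k + l)) u, (A ^ (k + l)) v⟫ = 0 := by
    have h2 := polarize A m hA ((A ^ k) u) ((A ^ k) v)
    rw [← h2]
    refine Finset.sum_congr rfl fun l _ => ?_
    rw [add_comm k l, pow_add, Module.End.mul_apply, Module.End.mul_apply]
  rw [hsum] at halt
  have hm1 : ((-1 : ℂ)) ^ m ≠ 0 := pow_ne_zero _ (by norm_num)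
  exact ((mul_eq_zero.mp halt.symm).resolve_left hm1)

end Main

end Stmt12Aux

open Finset Stmt12Aux

theorem stmt_12 {M : Type*} [NormedAddCommGroup M] [InnerProductSpace ℂ M]
    (A N : M →ₗ[ℂ] M) (m ν : ℕ) (hm : 0 < m) (hν : 0 < ν)
    (hA : ∀ h : M, ∑ k ∈ Finset.range (m + 1),
        (-1 : ℝ) ^ k * (m.choose k) * ‖(A ^ k) h‖ ^ 2 = 0)
    (hNnil : N ^ ν = 0) (hNind : N ^ (ν - 1) ≠ 0)
    (hcomm : A * N = N * A) :
    ∀ h : M, ∑ k ∈ Finset.range (m + 2 * (ν - 1) + 1),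
        (-1 : ℝ) ^ k * ((m + 2 * (ν - 1)).choose k) * ‖((A + N) ^ k) h‖ ^ 2 = 0 := by
  intro h
  set K := m + 2 * (ν - 1) with hK
  set T := A + N with hT'
  have hcN : Commute N A := hcomm.symm
  -- binomial expansion of T ^ k as a sum over range ν
  have hT : ∀ k : ℕ, T ^ k = ∑ i ∈ range ν, (k.choose i) • (A ^ (k - i) * N ^ i) := by
    intro k
    have h1 : T ^ k = ∑ i ∈ range (k + 1), (k.choose i) • (A ^ (k - i) * N ^ i) := by
      rw [hT', add_comm A N, Commute.add_pow hcN]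
      refine Finset.sum_congr rfl fun i hi => ?_
      rw [(hcN.pow_pow i (k - i)).eq, nsmul_eq_mul,
        (Nat.cast_commute (k.choose i) (A ^ (k - i) * N ^ i)).eq]
    have h2 : ∀ j, k < j → (k.choose j) • (A ^ (k - j) * N ^ j) = (0 : M →ₗ[ℂ] M) :=
      fun j hj => by rw [Nat.choose_eq_zero_of_lt hj, zero_smul]
    have h3 : ∀ j, ν ≤ j → (k.choose j) • (A ^ (k - j) * N ^ j) = (0 : M →ₗ[ℂ] M) := by
      intro j hj
      have hNj : N ^ j = 0 := by
        rw [show j = ν + (j - ν) by omega, pow_add, hNnil, zero_mul]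
      rw [hNj, mul_zero, smul_zero]
    rw [h1]
    rcases le_total (k + 1) ν with hle | hle
    · exact Finset.sum_subset (Finset.range_subset_range.mpr hle)
        (fun i hi hni => h2 i (by simp only [mem_range] at hni; omega))
    · exact (Finset.sum_subset (Finset.range_subset_range.mpr hle)
        (fun i hi hni => h3 i (by simp only [mem_range] at hni; omega))).symm
  -- expansion of the inner product
  have hexp : ∀ k : ℕ, (@inner ℂ M _ ((T ^ k) h) ((T ^ k) h))
      = ∑ i ∈ range ν, ∑ j ∈ range ν, ((k.choose i : ℂ) * (k.choose j) *
          @inner ℂ M _ ((A ^ (k - max i j)) ((A ^ (max i j - i)) ((N ^ i) h)))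
            ((A ^ (k - max i j)) ((A ^ (max i j - j)) ((N ^ j) h)))) := by
    intro k
    rw [hT k]
    simp only [LinearMap.sum_apply, LinearMap.smul_apply, Module.End.mul_apply]
    rw [sum_inner]
    refine Finset.sum_congr rfl fun i hi => ?_
    rw [inner_sum]
    refine Finset.sum_congr rfl fun j hj => ?_
    rw [← Nat.cast_smul_eq_nsmul ℂ, ← Nat.cast_smul_eq_nsmul ℂ, inner_smul_left,
      inner_smul_right, map_natCast]
    by_cases hik : i ≤ k
    · by_cases hjk : j ≤ k
      · have e1 : (A ^ (k - max i j)) ((A ^ (max i j - i)) ((N ^ i) h))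
            = (A ^ (k - i)) ((N ^ i) h) := by
          rw [← Module.End.mul_apply, ← pow_add]
          congr 2
          omega
        have e2 : (A ^ (k - max i j)) ((A ^ (max i j - j)) ((N ^ j) h))
            = (A ^ (k - j)) ((N ^ j) h) := by
          rw [← Module.End.mul_apply, ← pow_add]
          congr 2
          omega
        rw [e1, e2]
        ring
      · simp [Nat.choose_eq_zero_of_lt (lt_of_not_ge hjk)]
    · simp [Nat.choose_eq_zero_of_lt (lt_of_not_ge hik)]
  -- each (i, j) block vanishes
  have hpair : ∀ i ∈ range ν, ∀ j ∈ range ν,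
      ∑ k ∈ range (K + 1), (-1 : ℂ) ^ k * (K.choose k) *
        ((k.choose i : ℂ) * (k.choose j) *
          @inner ℂ M _ ((A ^ (k - max i j)) ((A ^ (max i j - i)) ((N ^ i) h)))
            ((A ^ (k - max i j)) ((A ^ (max i j - j)) ((N ^ j) h)))) = 0 := by
    intro i hi j hj
    set d := max i j with hd
    set e := min i j with he
    set u := (A ^ (d - i)) ((N ^ i) h) with hu
    set v := (A ^ (d - j)) ((N ^ j) h) with hv
    set q : ℕ → ℂ := fun l => @inner ℂ M _ ((A ^ l) u) ((A ^ l) v) with hq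
    have hqV : ∀ k, (fwdDiff 1)^[m] q k = 0 := V_inner A m hA u v
    have h1 := V_choose d m q hqV
    have h2 := V_prod e (m + d) _ h1
    have h3 : ∀ k, (fwdDiff 1)^[m + d + e] (fun (k : ℕ) => (e.factorial : ℂ)⁻¹ *
        ((∏ t ∈ range e, ((k : ℂ) - t)) * ((k.choose d : ℂ) * q (k - d)))) k = 0 := by
      intro k
      have hc := congrFun (iterD_const_mul (m + d + e) ((e.factorial : ℂ)⁻¹)
        (fun (k : ℕ) => (∏ t ∈ range e, ((k : ℂ) - t)) * ((k.choose d : ℂ) * q (k - d)))) k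
      rw [hc, h2 k, mul_zero]
    have h4 : ∀ k, (fwdDiff 1)^[K]
        (fun k => (k.choose i : ℂ) * (k.choose j) * q (k - d)) k = 0 := by
      have hfac : (e.factorial : ℂ) ≠ 0 := Nat.cast_ne_zero.mpr e.factorial_ne_zero
      have hfun : (fun (k : ℕ) => (k.choose i : ℂ) * (k.choose j) * q (k - d))
          = fun (k : ℕ) => (e.factorial : ℂ)⁻¹ *
              ((∏ t ∈ range e, ((k : ℂ) - t)) * ((k.choose d : ℂ) * q (k - d))) := by
        funext k
        rw [← cast_choose_prod k e]
        have hij : (k.choose i : ℂ) * (k.choose j) = (k.choose e : ℂ) * (k.choose d) := by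
          rcases le_total i j with hij' | hij'
          · rw [he, hd, min_eq_left hij', max_eq_right hij']
          · rw [he, hd, min_eq_right hij', max_eq_left hij']
            ring
        rw [hij]
        field_simp
      rw [hfun]
      have hle : m + d + e ≤ K := by
        have hi' : i < ν := mem_range.mp hi
        have hj' : j < ν := mem_range.mp hj
        have hd1 : d ≤ ν - 1 := by
          rw [hd]; exact Nat.max_le.mpr ⟨by omega, by omega⟩
        have he1 : e ≤ ν - 1 := by
          rw [he]; exact le_trans (Nat.min_le_left i j) (by omega)
        omega
      exact V_mono hle h3
    have halt := alt_sum_eq K (fun k => (k.choose i : ℂ) * (k.choose j) * q (k - d)) 0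
    rw [h4 0, mul_zero] at halt
    rw [← halt]
    refine Finset.sum_congr rfl fun k _ => ?_
    rw [zero_add]
  -- assembling
  have hcplx : ∑ k ∈ range (K + 1), (-1 : ℂ) ^ k * (K.choose k) *
      (@inner ℂ M _ ((T ^ k) h) ((T ^ k) h)) = 0 := by
    calc ∑ k ∈ range (K + 1), (-1 : ℂ) ^ k * (K.choose k) *
        (@inner ℂ M _ ((T ^ k) h) ((T ^ k) h))
        = ∑ k ∈ range (K + 1), ∑ i ∈ range ν, ∑ j ∈ range ν,
            (-1 : ℂ) ^ k * (K.choose k) * ((k.choose i : ℂ) * (k.choose j) *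
            @inner ℂ M _ ((A ^ (k - max i j)) ((A ^ (max i j - i)) ((N ^ i) h)))
              ((A ^ (k - max i j)) ((A ^ (max i j - j)) ((N ^ j) h)))) := by
          refine Finset.sum_congr rfl fun k _ => ?_
          rw [hexp k, Finset.mul_sum]
          exact Finset.sum_congr rfl fun i _ => by rw [Finset.mul_sum]
      _ = ∑ i ∈ range ν, ∑ j ∈ range ν, ∑ k ∈ range (K + 1),
            (-1 : ℂ) ^ k * (K.choose k) * ((k.choose i : ℂ) * (k.choose j) *
            @inner ℂ M _ ((A ^ (k - max i j)) ((A ^ (max i j - i)) ((N ^ i) h)))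
              ((A ^ (k - max i j)) ((A ^ (max i j - j)) ((N ^ j) h)))) := by
          rw [Finset.sum_comm]
          exact Finset.sum_congr rfl fun i _ => by rw [Finset.sum_comm]
      _ = 0 := Finset.sum_eq_zero fun i hi => Finset.sum_eq_zero fun j hj => hpair i hi j hj
  have hreal : ((∑ k ∈ range (K + 1),
      (-1 : ℝ) ^ k * (K.choose k) * ‖(T ^ k) h‖ ^ 2 : ℝ) : ℂ) = 0 := by
    rw [← hcplx]
    push_cast
    refine Finset.sum_congr rfl fun k _ => ?_
    rw [inner_self_eq_norm_sq_to_K,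
      show ((‖(T ^ k) h‖ : ℝ) : ℂ) = @RCLike.ofReal ℂ _ ‖(T ^ k) h‖ from rfl]
  exact_mod_cast hreal
end

section
/- Let M be a nonzero complex inner product space, N : M → M a nilpotent linear operator, and z ∈ ℂ. If for every h ∈ M, ‖(zI + N)^n h‖² is a polynomial in n, then |z| = 1. -/
open Polynomial

lemma aux_ker {M : Type*} [AddCommGroup M] [Module ℂ M] (N : M →ₗ[ℂ] M) :
    ∀ (k : ℕ) (x : M), x ≠ 0 → (N ^ k) x = 0 → ∃ h : M, h ≠ 0 ∧ N h = 0 := by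
  intro k
  induction k with
  | zero => intro x hx h0; simp at h0; exact absurd h0 hx
  | succ k ih =>
      intro x hx h0
      by_cases hNx : N x = 0
      · exact ⟨x, hx, hNx⟩
      · refine ih (N x) hNx ?_
        rw [pow_succ] at h0
        exact h0

lemma aux_poly (p : Polynomial ℝ) (c r : ℝ) (hc : 0 < c) (hr : 0 ≤ r)
    (hp : ∀ n : ℕ, p.eval (n : ℝ) = c * r ^ n) : r = 1 := by
  have hpne : p ≠ 0 := by
    intro h
    have := hp 0
    simp [h] at this
    linarith
  have hq : p.comp (X + C 1) - C r * p = 0 := by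
    apply Polynomial.eq_zero_of_infinite_isRoot
    apply Set.infinite_of_injective_forall_mem (f := fun n : ℕ => (n : ℝ))
      Nat.cast_injective
    intro n
    simp only [Set.mem_setOf_eq, IsRoot, eval_sub, eval_comp, eval_add, eval_X, eval_C,
      eval_mul]
    have h1 := hp (n + 1)
    push_cast at h1
    rw [h1, hp n]
    ring
  have hcomp : p.comp (X + C 1) = C r * p := by
    have := sub_eq_zero.mp hq
    exact this
  rcases eq_or_ne r 0 with hr0 | hr0
  · exfalso
    rw [hr0] at hcomp
    simp only [map_zero, zero_mul] at hcomp
    have : p = 0 := by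
      apply Polynomial.eq_zero_of_infinite_isRoot
      apply Set.infinite_of_injective_forall_mem (f := fun x : ℝ => x - 1)
        (fun a b hab => by simpa using hab)
      intro x
      simp only [Set.mem_setOf_eq, IsRoot]
      have := congrArg (eval (x - 2)) hcomp
      simpa [eval_comp, show x - 2 + 1 = x - 1 by ring] using this
    exact hpne this
  · have hdX : (X + C (1:ℝ)).natDegree = 1 := by
      simpa using Polynomial.natDegree_X_add_C (1:ℝ)
    have hlc := Polynomial.leadingCoeff_comp (p := p) (q := X + C 1) (by rw [hdX]; norm_num)
    have hlcX : (X + C (1:ℝ)).leadingCoeff = 1 := Polynomial.leadingCoeff_X_add_C 1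
    rw [hlcX, one_pow, mul_one, hcomp] at hlc
    rw [Polynomial.leadingCoeff_mul, Polynomial.leadingCoeff_C] at hlc
    have hlp : p.leadingCoeff ≠ 0 := Polynomial.leadingCoeff_ne_zero.mpr hpne
    have : r * p.leadingCoeff = 1 * p.leadingCoeff := by rw [hlc]; ring
    exact mul_right_cancel₀ hlp this

theorem stmt_14 {M : Type*} [NormedAddCommGroup M] [InnerProductSpace ℂ M] [Nontrivial M]
    (N : M →ₗ[ℂ] M) (hN : ∃ k : ℕ, N ^ k = 0) (z : ℂ)
    (hpoly : ∀ h : M, ∃ p : Polynomial ℝ,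
        ∀ n : ℕ, p.eval (n : ℝ) = ‖((z • (1 : M →ₗ[ℂ] M) + N) ^ n) h‖ ^ 2) :
    ‖z‖ = 1 := by
  obtain ⟨k, hk⟩ := hN
  obtain ⟨x, hx⟩ := exists_ne (0 : M)
  obtain ⟨h, hh0, hNh⟩ := aux_ker N k x hx (by rw [hk]; rfl)
  obtain ⟨p, hp⟩ := hpoly h
  have key : ∀ n : ℕ, ((z • (1 : M →ₗ[ℂ] M) + N) ^ n) h = z ^ n • h := by
    intro n
    induction n with
    | zero => simp
    | succ n ih =>
        rw [pow_succ]
        have h1 : (z • (1 : M →ₗ[ℂ] M) + N) h = z • h := by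
          simp [hNh]
        calc ((z • (1 : M →ₗ[ℂ] M) + N) ^ n * (z • (1 : M →ₗ[ℂ] M) + N)) h
            = ((z • (1 : M →ₗ[ℂ] M) + N) ^ n) ((z • (1 : M →ₗ[ℂ] M) + N) h) := rfl
          _ = ((z • (1 : M →ₗ[ℂ] M) + N) ^ n) (z • h) := by rw [h1]
          _ = z • ((z • (1 : M →ₗ[ℂ] M) + N) ^ n) h := by rw [map_smul]
          _ = z ^ (n + 1) • h := by rw [ih, smul_smul, ← pow_succ']
  have habs : ∀ n : ℕ, p.eval (n : ℝ) = ‖h‖ ^ 2 * (‖z‖ ^ 2) ^ n := by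
    intro n
    rw [hp n, key n, norm_smul, mul_pow, norm_pow, ← pow_mul, ← pow_mul,
      Nat.mul_comm n 2]
    ring
  have hc : (0:ℝ) < ‖h‖ ^ 2 := pow_pos (norm_pos_iff.mpr hh0) 2
  have := aux_poly p (‖h‖ ^ 2) (‖z‖ ^ 2) hc (by positivity) habs
  nlinarith [norm_nonneg z]
end

section
/- Suppose p, q ∈ ℂ[x] and α ∈ ℂ with |α| = 1, α ≠ 1, satisfy p(n) = Re(α^n q(n)) for all n ∈ ℕ. Then Re q = 0 if α = −1, and q = 0 otherwise. (Here Re q denotes the polynomial obtained by taking real parts of the coefficients of q.) -/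
open Polynomial

namespace Stmt16Aux

lemma eval_nat_zero (A : ℂ[X]) (h : ∀ n : ℕ, A.eval (n : ℂ) = 0) : A = 0 := by
  apply Polynomial.eq_zero_of_infinite_isRoot
  exact (Set.infinite_range_of_injective (Nat.cast_injective (R := ℂ))).mono
    (by rintro x ⟨n, rfl⟩; exact h n)

lemma natDegree_X_add_one : ((X + 1 : ℂ[X])).natDegree = 1 := by
  simpa using natDegree_X_add_C (1 : ℂ)

lemma monic_X_add_one : ((X + 1 : ℂ[X])).Monic := by
  simpa using monic_X_add_C (1 : ℂ)

lemma natDegree_comp_X_add_one (B : ℂ[X]) : (B.comp (X + 1)).natDegree = B.natDegree := by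
  simp [natDegree_comp, natDegree_X_add_one]

lemma leadingCoeff_comp_X_add_one (B : ℂ[X]) : (B.comp (X + 1)).leadingCoeff = B.leadingCoeff := by
  rw [leadingCoeff_comp (by rw [natDegree_X_add_one]; norm_num), monic_X_add_one.leadingCoeff]
  simp

lemma cancel {α β : ℂ} (hαβ : α ≠ β) {B : ℂ[X]}
    (h : C α * B.comp (X + 1) - C β * B = 0) : B = 0 := by
  by_contra hB
  have hd : (B.comp (X + 1)).coeff B.natDegree = B.coeff B.natDegree := by
    have h1 := natDegree_comp_X_add_one B
    have h2 := leadingCoeff_comp_X_add_one B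
    rwa [leadingCoeff, leadingCoeff, h1] at h2
  have hc := congrArg (fun P => Polynomial.coeff P B.natDegree) h
  simp only [coeff_sub, coeff_C_mul, hd, coeff_zero] at hc
  have h3 : (α - β) * B.coeff B.natDegree = 0 := by linear_combination hc
  rcases mul_eq_zero.mp h3 with h' | h'
  · exact hαβ (sub_eq_zero.mp h')
  · exact hB (leadingCoeff_eq_zero.mp h')

lemma step {α β : ℂ} {A B Cq : ℂ[X]}
    (h : ∀ n : ℕ, A.eval (n:ℂ) + α ^ n * B.eval (n:ℂ) + β ^ n * Cq.eval (n:ℂ) = 0) :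
    ∀ n : ℕ, (A.comp (X+1) - C β * A).eval (n:ℂ)
      + α ^ n * (C α * B.comp (X+1) - C β * B).eval (n:ℂ)
      + β ^ n * (C β * (Cq.comp (X+1) - Cq)).eval (n:ℂ) = 0 := by
  intro n
  have h1 := h (n+1)
  have h2 := h n
  have e : ((n+1 : ℕ) : ℂ) = (n:ℂ) + 1 := by push_cast; ring
  rw [e] at h1
  simp only [eval_sub, eval_mul, eval_C, eval_comp, eval_add, eval_X, eval_one, pow_succ] at *
  linear_combination h1 - β * h2

end Stmt16Aux

namespace Stmt16Aux

lemma pow_mul_eval_zero {α : ℂ} (hα0 : α ≠ 0) {B : ℂ[X]}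
    (h : ∀ n : ℕ, α ^ n * B.eval (n:ℂ) = 0) : B = 0 :=
  eval_nat_zero _ fun n => (mul_eq_zero.mp (h n)).resolve_left (pow_ne_zero n hα0)

lemma two_term {α : ℂ} (hα0 : α ≠ 0) (hα1 : α ≠ 1) (A B : ℂ[X])
    (h : ∀ n : ℕ, A.eval (n:ℂ) + α ^ n * B.eval (n:ℂ) = 0) : B = 0 := by
  generalize hd : A.natDegree = d
  induction d using Nat.strong_induction_on generalizing A B with
  | _ d ih =>
  have h3 : ∀ n : ℕ, A.eval (n:ℂ) + α ^ n * B.eval (n:ℂ)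
      + (1:ℂ) ^ n * (0:ℂ[X]).eval (n:ℂ) = 0 := by simpa using h
  have h' := step h3
  simp only [eval_zero, mul_zero, sub_zero, zero_comp, zero_sub, mul_zero, add_zero,
    one_pow, C_1, one_mul] at h'
  -- h' : ∀ n, (A.comp (X+1) - A).eval n + α^n * (C α * B.comp (X+1) - B).eval n = 0
  by_cases hA' : A.comp (X+1) - A = 0
  · have hz : ∀ n : ℕ, α ^ n * (C α * B.comp (X+1) - B).eval (n:ℂ) = 0 := by
      intro n
      have := h' n
      rw [hA'] at this
      simpa using this
    have hB : C α * B.comp (X+1) - B = 0 := pow_mul_eval_zero hα0 hz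
    exact cancel hα1 (by rw [C_1, one_mul]; exact hB)
  · have hA : A ≠ 0 := fun h0 => hA' (by simp [h0])
    have hco : A.comp (X+1) ≠ 0 := fun h0 => by
      have := leadingCoeff_comp_X_add_one A
      rw [h0] at this
      exact hA (leadingCoeff_eq_zero.mp (by simpa using this.symm))
    have hdegeq : (A.comp (X+1)).degree = A.degree := by
      rw [degree_eq_natDegree hco, degree_eq_natDegree hA, natDegree_comp_X_add_one]
    have hlt : (A.comp (X+1) - A).degree < A.degree := by
      have := degree_sub_lt hdegeq hco (leadingCoeff_comp_X_add_one A)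
      rwa [hdegeq] at this
    have hlt' : (A.comp (X+1) - A).natDegree < d := by
      rw [← hd]
      exact natDegree_lt_natDegree hA' hlt
    have hB : C α * B.comp (X+1) - B = 0 := ih _ hlt' _ _ h' rfl
    exact cancel hα1 (by rw [C_1, one_mul]; exact hB)

lemma three_term {α β : ℂ} (hα0 : α ≠ 0) (hα1 : α ≠ 1) (hαβ : α ≠ β) (A B Cq : ℂ[X])
    (h : ∀ n : ℕ, A.eval (n:ℂ) + α ^ n * B.eval (n:ℂ) + β ^ n * Cq.eval (n:ℂ) = 0) :
    B = 0 := by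
  generalize hd : Cq.natDegree = d
  induction d using Nat.strong_induction_on generalizing A B Cq with
  | _ d ih =>
  have h' := step h
  by_cases hC : Cq.comp (X+1) - Cq = 0
  · have h2 : ∀ n : ℕ, (A.comp (X+1) - C β * A).eval (n:ℂ)
        + α ^ n * (C α * B.comp (X+1) - C β * B).eval (n:ℂ) = 0 := by
      intro n
      have := h' n
      rw [hC] at this
      simpa using this
    exact cancel hαβ (two_term hα0 hα1 _ _ h2)
  · have hCq : Cq ≠ 0 := fun h0 => hC (by simp [h0])
    have hco : Cq.comp (X+1) ≠ 0 := fun h0 => by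
      have := leadingCoeff_comp_X_add_one Cq
      rw [h0] at this
      exact hCq (leadingCoeff_eq_zero.mp (by simpa using this.symm))
    have hdegeq : (Cq.comp (X+1)).degree = Cq.degree := by
      rw [degree_eq_natDegree hco, degree_eq_natDegree hCq, natDegree_comp_X_add_one]
    have hlt : (Cq.comp (X+1) - Cq).degree < Cq.degree := by
      have := degree_sub_lt hdegeq hco (leadingCoeff_comp_X_add_one Cq)
      rwa [hdegeq] at this
    have hlt' : (C β * (Cq.comp (X+1) - Cq)).natDegree < d := by
      rw [← hd]
      exact lt_of_le_of_lt (natDegree_C_mul_le _ _) (natDegree_lt_natDegree hC hlt)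
    exact cancel hαβ (ih _ hlt' _ _ _ h' rfl)

end Stmt16Aux

open Stmt16Aux Polynomial in
theorem stmt_16 (p q : Polynomial ℂ) (α : ℂ) (hα : ‖α‖ = 1) (hα1 : α ≠ 1)
    (hpq : ∀ n : ℕ, p.eval (n : ℂ) = (((α ^ n * q.eval (n : ℂ)).re : ℝ) : ℂ)) :
    (α = -1 → ∀ i : ℕ, (q.coeff i).re = 0) ∧ (α ≠ -1 → q = 0) := by
  have hα0 : α ≠ 0 := by intro h; rw [h] at hα; simp at hα
  have hev : ∀ n : ℕ, (q.map (starRingEnd ℂ)).eval (n:ℂ) = (starRingEnd ℂ) (q.eval (n:ℂ)) := by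
    intro n
    rw [eval_map, eval₂_at_natCast]
  have hrel : ∀ n : ℕ, (C (-2) * p).eval (n:ℂ) + α ^ n * q.eval (n:ℂ)
      + (starRingEnd ℂ α) ^ n * (q.map (starRingEnd ℂ)).eval (n:ℂ) = 0 := by
    intro n
    rw [hev n, eval_mul, eval_C]
    have h1 := hpq n
    have h2 : (((α ^ n * q.eval (n:ℂ)).re : ℝ) : ℂ)
        = (α ^ n * q.eval (n:ℂ) + (starRingEnd ℂ) (α ^ n * q.eval (n:ℂ))) / 2 := by
      rw [Complex.add_conj]
      push_cast
      ring
    rw [h2, map_mul, map_pow] at h1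
    linear_combination -2 * h1
  constructor
  · intro hm1 i
    have hrel2 : ∀ n : ℕ, (C (-2) * p).eval (n:ℂ)
        + (-1:ℂ) ^ n * (q + q.map (starRingEnd ℂ)).eval (n:ℂ) = 0 := by
      intro n
      have := hrel n
      rw [hm1] at this
      simp only [map_neg, map_one, eval_mul, eval_neg, eval_C, eval_add] at this ⊢
      linear_combination this
    have hz : q + q.map (starRingEnd ℂ) = 0 :=
      two_term (by norm_num) (by norm_num) _ _ hrel2
    have hc := congrArg (fun P => Polynomial.coeff P i) hz
    simp only [coeff_add, coeff_map, coeff_zero] at hc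
    rw [Complex.add_conj] at hc
    have : 2 * (q.coeff i).re = 0 := by exact_mod_cast hc
    linarith
  · intro hm1
    have hne : α ≠ starRingEnd ℂ α := by
      intro hc
      have h2 : (α.re : ℂ) = α := Complex.conj_eq_iff_re.mp hc.symm
      rw [← h2, Complex.norm_real, Real.norm_eq_abs] at hα
      rcases (abs_eq (by norm_num : (0:ℝ) ≤ 1)).mp hα with h | h
      · exact hα1 (by rw [← h2, h]; norm_num)
      · exact hm1 (by rw [← h2, h]; norm_num)
    exact three_term hα0 hα1 hne _ _ _ hrel
end

section
/- Let T be a linear operator on a complex inner product space M, and let z₁, z₂ be distinct unimodular complex numbers with z₁ ≠ −z₂. If h₁ ∈ ker((T − z₁I)^{k₁}) and h₂ ∈ ker((T − z₂I)^{k₂}) for some k₁, k₂ ∈ ℕ, and ‖T^n(h₁ + h₂)‖² is a polynomial in n, then ⟨T^n h₁, T^n h₂⟩ = 0 for all n ∈ ℕ. -/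
open Polynomial

noncomputable section Stmt17Helpers

lemma eval_nat_zero (A : ℂ[X]) (h : ∀ n : ℕ, A.eval (n : ℂ) = 0) : A = 0 := by
  apply A.eq_zero_of_infinite_isRoot
  apply Set.infinite_of_injective_forall_mem (f := fun n : ℕ => (n : ℂ))
    Nat.cast_injective
  intro n; exact h n

lemma ndXadd : ((X : ℂ[X]) + 1).natDegree = 1 := by
  simpa using natDegree_X_add_C (1 : ℂ)

lemma lcXadd : ((X : ℂ[X]) + 1).leadingCoeff = 1 := by
  simpa using leadingCoeff_X_add_C (1 : ℂ)

lemma inj_aux (u v : ℂ) (huv : u ≠ v) (A : ℂ[X])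
    (h : C u * A.comp (X + C 1) - C v * A = 0) : A = 0 := by
  by_contra hA
  have hnc : (A.comp (X + C 1)).natDegree = A.natDegree := by
    simp [natDegree_comp, ndXadd]
  have hdc : (A.comp (X + C 1)).coeff A.natDegree = A.leadingCoeff := by
    rw [← hnc, coeff_natDegree, leadingCoeff_comp (by simp [ndXadd])]
    simp [lcXadd]
  have h0 := congrArg (fun q : ℂ[X] => q.coeff A.natDegree) h
  simp only [coeff_sub, coeff_C_mul, hdc, coeff_natDegree, coeff_zero] at h0
  exact mul_ne_zero (sub_ne_zero.mpr huv) (leadingCoeff_ne_zero.mpr hA)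
    (by linear_combination h0)

-- degree drop

lemma deg_drop (B : ℂ[X]) (d : ℕ) (hB : B.natDegree = d + 1) :
    (B.comp (X + C 1) - B).natDegree ≤ d := by
  have hB0 : B ≠ 0 := fun h0 => by simp [h0] at hB
  have hnc : (B.comp (X + C 1)).natDegree = B.natDegree := by
    simp [natDegree_comp, ndXadd]
  have hc0 : B.comp (X + C 1) ≠ 0 := by
    intro h0
    rw [h0, natDegree_zero] at hnc
    omega
  have hlc : (B.comp (X + C 1)).leadingCoeff = B.leadingCoeff := by
    rw [leadingCoeff_comp (by simp [ndXadd]), leadingCoeff_X_add_C, one_pow, mul_one]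
  have hdeg : (B.comp (X + C 1)).degree = B.degree := by
    rw [degree_eq_natDegree hc0, degree_eq_natDegree hB0, hnc]
  by_cases hD : B.comp (X + C 1) - B = 0
  · rw [hD]; simp
  · have := degree_sub_lt hdeg hc0 hlc
    have h2 := natDegree_lt_natDegree hD this
    omega

lemma lemX (u v : ℂ) (hu : u ≠ 0) (huv : u ≠ v) :
    ∀ d : ℕ, ∀ A B : ℂ[X], B.natDegree ≤ d →
      (∀ n : ℕ, u ^ n * A.eval (n : ℂ) + v ^ n * B.eval (n : ℂ) = 0) → A = 0 := by
  intro d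
  induction d with
  | zero =>
    intro A B hB h
    obtain ⟨c, hc⟩ := natDegree_eq_zero.mp (Nat.le_zero.mp hB)
    have hA1 : ∀ n : ℕ, (C u * A.comp (X + C 1) - C v * A).eval (n : ℂ) = 0 := by
      intro n
      have e1 := h (n + 1)
      have e2 := h n
      push_cast at e1
      have hBc : B.eval ((n : ℂ) + 1) = B.eval (n : ℂ) := by rw [← hc]; simp
      rw [hBc] at e1
      have : u ^ n * (u * A.eval ((n : ℂ) + 1) - v * A.eval (n : ℂ)) = 0 := by
        linear_combination e1 - v * e2
      simp only [eval_sub, eval_mul, eval_C, eval_comp, eval_add, eval_X, eval_one]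
      exact (mul_eq_zero.mp this).resolve_left (pow_ne_zero n hu)
    exact inj_aux u v huv A (eval_nat_zero _ hA1)
  | succ d ih =>
    intro A B hB h
    rcases Nat.lt_or_ge B.natDegree (d + 1) with hlt | hge
    · exact ih A B (by omega) h
    have hBd : B.natDegree = d + 1 := by omega
    set A₁ := C u * A.comp (X + C 1) - C v * A with hA₁
    set B₁ := C v * (B.comp (X + C 1) - B) with hB₁
    have hkey : ∀ n : ℕ, u ^ n * A₁.eval (n : ℂ) + v ^ n * B₁.eval (n : ℂ) = 0 := by
      intro n
      have e1 := h (n + 1)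
      have e2 := h n
      push_cast at e1
      simp only [hA₁, hB₁, eval_sub, eval_mul, eval_C, eval_comp, eval_add, eval_X, eval_one]
      linear_combination e1 - v * e2
    have hB₁d : B₁.natDegree ≤ d :=
      le_trans (natDegree_C_mul_le _ _) (deg_drop B d hBd)
    exact inj_aux u v huv A (ih A₁ B₁ hB₁d hkey)

lemma lemY (u v : ℂ) (hu : u ≠ 0) (huv : u ≠ v) (hu1 : u ≠ 1) :
    ∀ e : ℕ, ∀ A B Cp : ℂ[X], Cp.natDegree ≤ e →
      (∀ n : ℕ, u ^ n * A.eval (n : ℂ) + v ^ n * B.eval (n : ℂ) + Cp.eval (n : ℂ) = 0) →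
      A = 0 := by
  intro e
  induction e with
  | zero =>
    intro A B Cp hC h
    obtain ⟨c, hc⟩ := natDegree_eq_zero.mp (Nat.le_zero.mp hC)
    set A₂ := C u * A.comp (X + C 1) - C 1 * A with hA₂
    set B₂ := C v * B.comp (X + C 1) - C 1 * B with hB₂
    have hkey : ∀ n : ℕ, u ^ n * A₂.eval (n : ℂ) + v ^ n * B₂.eval (n : ℂ) = 0 := by
      intro n
      have e1 := h (n + 1)
      have e2 := h n
      push_cast at e1
      have hCc : Cp.eval ((n : ℂ) + 1) = Cp.eval (n : ℂ) := by rw [← hc]; simp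
      rw [hCc] at e1
      simp only [hA₂, hB₂, eval_sub, eval_mul, eval_C, eval_comp, eval_add, eval_X, eval_one]
      linear_combination e1 - e2
    exact inj_aux u 1 hu1 A (lemX u v hu huv B₂.natDegree A₂ B₂ le_rfl hkey)
  | succ e ih =>
    intro A B Cp hC h
    rcases Nat.lt_or_ge Cp.natDegree (e + 1) with hlt | hge
    · exact ih A B Cp (by omega) h
    have hCd : Cp.natDegree = e + 1 := by omega
    set A₂ := C u * A.comp (X + C 1) - C 1 * A with hA₂
    set B₂ := C v * B.comp (X + C 1) - C 1 * B with hB₂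
    set C₂ := Cp.comp (X + C 1) - Cp with hC₂
    have hkey : ∀ n : ℕ, u ^ n * A₂.eval (n : ℂ) + v ^ n * B₂.eval (n : ℂ)
        + C₂.eval (n : ℂ) = 0 := by
      intro n
      have e1 := h (n + 1)
      have e2 := h n
      push_cast at e1
      simp only [hA₂, hB₂, hC₂, eval_sub, eval_mul, eval_C, eval_comp, eval_add, eval_X, eval_one]
      linear_combination e1 - e2
    exact inj_aux u 1 hu1 A (ih A₂ B₂ C₂ (deg_drop Cp e hCd) hkey)

def chpoly (j : ℕ) : ℂ[X] := C ((j.factorial : ℂ)⁻¹) * descPochhammer ℂ j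

lemma chpoly_eval (j n : ℕ) : (chpoly j).eval (n : ℂ) = (n.choose j : ℂ) := by
  rw [chpoly, eval_mul, eval_C, descPochhammer_eval_eq_descFactorial,
    Nat.descFactorial_eq_factorial_mul_choose, Nat.cast_mul,
    inv_mul_cancel_left₀ (by exact_mod_cast j.factorial_ne_zero)]

variable {M : Type*} [NormedAddCommGroup M] [InnerProductSpace ℂ M]

lemma expand (T : M →ₗ[ℂ] M) (z : ℂ) (hz : z * (starRingEnd ℂ) z = 1) (h : M) (k : ℕ)
    (hk : ((T - z • (1 : M →ₗ[ℂ] M)) ^ k) h = 0) (n : ℕ) :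
    (T ^ n) h = ∑ j ∈ Finset.range k,
      ((n.choose j : ℂ) * z ^ n * ((starRingEnd ℂ) z) ^ j) •
        (((T - z • (1 : M →ₗ[ℂ] M)) ^ j) h) := by
  set c := (starRingEnd ℂ) z with hc
  set N := T - z • (1 : M →ₗ[ℂ] M) with hN
  induction n with
  | zero =>
    simp only [pow_zero, Module.End.one_apply]
    rcases Nat.eq_zero_or_pos k with hk0 | hk0
    · subst hk0
      simpa using hk
    · rw [Finset.sum_eq_single 0]
      · simp
      · intro j _ hj0
        rw [Nat.choose_eq_zero_of_lt (Nat.pos_of_ne_zero hj0)]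
        simp
      · intro habs; exact absurd (Finset.mem_range.mpr hk0) habs
  | succ n ih =>
    have hTN : ∀ x : M, T x = N x + z • x := by
      intro x; simp [hN, LinearMap.sub_apply, LinearMap.smul_apply, sub_add_cancel]
    have step : ∀ j : ℕ, T ((N ^ j) h) = (N ^ (j + 1)) h + z • (N ^ j) h := by
      intro j
      rw [pow_succ', Module.End.mul_apply, ← hTN]
    rw [pow_succ', Module.End.mul_apply, ih, map_sum]
    have hterm : ∀ j ∈ Finset.range k,
        T (((n.choose j : ℂ) * z ^ n * c ^ j) • ((N ^ j) h)) =
        ((n.choose j : ℂ) * z ^ n * c ^ j) • ((N ^ (j + 1)) h)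
          + ((n.choose j : ℂ) * z ^ n * c ^ j * z) • ((N ^ j) h) := by
      intro j _
      rw [map_smul, step j, smul_add, smul_smul]
    rw [Finset.sum_congr rfl hterm, Finset.sum_add_distrib]
    set g : ℕ → M := fun j =>
      (if j = 0 then (0 : ℂ) else ((n.choose (j - 1) : ℂ) * z ^ n * c ^ (j - 1))) • ((N ^ j) h)
      with hg
    have h1 : ∑ j ∈ Finset.range k, ((n.choose j : ℂ) * z ^ n * c ^ j) • ((N ^ (j + 1)) h)
        = ∑ j ∈ Finset.range k, g (j + 1) := by
      apply Finset.sum_congr rfl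
      intro j _
      simp [hg]
    have hg0 : g 0 = 0 := by simp [hg]
    have hg2 : g = fun j =>
        (if j = 0 then (0 : ℂ) else ((n.choose (j - 1) : ℂ) * z ^ n * c ^ (j - 1))) • ((N ^ j) h) :=
      hg
    have h2 : ∑ j ∈ Finset.range k, g (j + 1) = ∑ j ∈ Finset.range k, g j := by
      have h3 := Finset.sum_range_succ' g k
      rw [Finset.sum_range_succ] at h3
      have hgk : g k = 0 := by rw [hg2]; simp only [hk, smul_zero]
      simp only [hg0, hgk, add_zero] at h3
      exact h3.symm
    rw [h1, h2, ← Finset.sum_add_distrib]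
    apply Finset.sum_congr rfl
    intro j _
    match j with
    | 0 =>
      rw [hg0, zero_add]
      congr 1
      simp only [Nat.choose_zero_right, Nat.cast_one, one_mul, mul_one, Nat.cast_ofNat]
      ring
    | (i + 1) =>
      simp only [hg, if_neg (Nat.succ_ne_zero i), Nat.add_sub_cancel]
      rw [← add_smul]
      congr 1
      rw [Nat.choose_succ_succ, Nat.cast_add]
      linear_combination (-(n.choose i : ℂ) * z ^ n * c ^ i) * hz

lemma pairPoly (T : M →ₗ[ℂ] M) (za zb : ℂ) (ha hb : M) (ka kb : ℕ)
    (hza : za * (starRingEnd ℂ) za = 1) (hzb : zb * (starRingEnd ℂ) zb = 1)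
    (hka : ((T - za • (1 : M →ₗ[ℂ] M)) ^ ka) ha = 0)
    (hkb : ((T - zb • (1 : M →ₗ[ℂ] M)) ^ kb) hb = 0) :
    ∃ P : ℂ[X], ∀ n : ℕ, (inner ℂ ((T ^ n) ha) ((T ^ n) hb) : ℂ) =
      ((starRingEnd ℂ) za * zb) ^ n * P.eval (n : ℂ) := by
  refine ⟨∑ j ∈ Finset.range ka, ∑ l ∈ Finset.range kb,
    C (za ^ j * ((starRingEnd ℂ) zb) ^ l *
      (inner ℂ (((T - za • (1 : M →ₗ[ℂ] M)) ^ j) ha)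
             (((T - zb • (1 : M →ₗ[ℂ] M)) ^ l) hb) : ℂ)) * chpoly j * chpoly l, ?_⟩
  intro n
  rw [expand T za hza ha ka hka n, expand T zb hzb hb kb hkb n, sum_inner]
  rw [eval_finset_sum, Finset.mul_sum]
  apply Finset.sum_congr rfl
  intro j _
  rw [inner_sum, eval_finset_sum, Finset.mul_sum]
  apply Finset.sum_congr rfl
  intro l _
  rw [inner_smul_left, inner_smul_right, eval_mul, eval_mul, eval_C, chpoly_eval, chpoly_eval]
  simp only [map_mul, map_pow, Complex.conj_conj, map_natCast]
  ring

end Stmt17Helpers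




theorem stmt_17 {M : Type*} [NormedAddCommGroup M] [InnerProductSpace ℂ M]
    (T : M →ₗ[ℂ] M) (z₁ z₂ : ℂ) (h₁ h₂ : M) (k₁ k₂ : ℕ)
    (hz1 : ‖z₁‖ = 1) (hz2 : ‖z₂‖ = 1)
    (hne : z₁ ≠ z₂) (hne' : z₁ ≠ -z₂)
    (hk1 : ((T - z₁ • (1 : M →ₗ[ℂ] M)) ^ k₁) h₁ = 0)
    (hk2 : ((T - z₂ • (1 : M →ₗ[ℂ] M)) ^ k₂) h₂ = 0)
    (hpoly : ∃ p : Polynomial ℝ, ∀ n : ℕ, p.eval (n : ℝ) = ‖(T ^ n) (h₁ + h₂)‖ ^ 2) :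
    ∀ n : ℕ, (inner ℂ ((T ^ n) h₁) ((T ^ n) h₂) : ℂ) = 0 := by
  obtain ⟨p, hp⟩ := hpoly
  have hz1' : z₁ * (starRingEnd ℂ) z₁ = 1 := by
    rw [Complex.mul_conj, Complex.normSq_eq_norm_sq, hz1]
    norm_num
  have hz2' : z₂ * (starRingEnd ℂ) z₂ = 1 := by
    rw [Complex.mul_conj, Complex.normSq_eq_norm_sq, hz2]
    norm_num
  set w : ℂ := (starRingEnd ℂ) z₁ * z₂ with hw
  have hw0 : w ≠ 0 := by
    have hinv : w * (z₁ * (starRingEnd ℂ) z₂) = 1 := by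
      rw [hw]
      linear_combination (z₂ * (starRingEnd ℂ) z₂) * hz1' + hz2'
    exact left_ne_zero_of_mul_eq_one hinv
  have hw1 : w ≠ 1 := by
    intro h0
    apply hne
    calc z₁ = z₁ * 1 := by ring
    _ = z₁ * ((starRingEnd ℂ) z₁ * z₂) := by rw [← h0]
    _ = (z₁ * (starRingEnd ℂ) z₁) * z₂ := by ring
    _ = z₂ := by rw [hz1']; ring
  have hwc : w ≠ (starRingEnd ℂ) w := by
    intro h0
    rw [hw, map_mul, Complex.conj_conj] at h0
    have hsq : (z₁ - z₂) * (z₁ + z₂) = 0 := by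
      linear_combination -z₁ * z₂ * h0 + z₂ ^ 2 * hz1' - z₁ ^ 2 * hz2'
    rcases mul_eq_zero.mp hsq with h | h
    · exact hne (sub_eq_zero.mp h)
    · exact hne' (eq_neg_of_add_eq_zero_left h)
  obtain ⟨P, hP⟩ := pairPoly T z₁ z₂ h₁ h₂ k₁ k₂ hz1' hz2' hk1 hk2
  obtain ⟨P₁, hP1⟩ := pairPoly T z₁ z₁ h₁ h₁ k₁ k₁ hz1' hz1' hk1 hk1
  obtain ⟨P₂, hP2⟩ := pairPoly T z₂ z₂ h₂ h₂ k₂ k₂ hz2' hz2' hk2 hk2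
  have hone1 : (starRingEnd ℂ) z₁ * z₁ = 1 := by rw [mul_comm]; exact hz1'
  have hone2 : (starRingEnd ℂ) z₂ * z₂ = 1 := by rw [mul_comm]; exact hz2'
  have grand : ∀ n : ℕ, w ^ n * P.eval (n : ℂ)
      + ((starRingEnd ℂ) w) ^ n * (P.map (starRingEnd ℂ)).eval (n : ℂ)
      + (P₁ + P₂ - p.map Complex.ofRealHom).eval (n : ℂ) = 0 := by
    intro n
    have hx : (T ^ n) (h₁ + h₂) = (T ^ n) h₁ + (T ^ n) h₂ := map_add _ _ _
    have einner : (inner ℂ ((T ^ n) h₁ + (T ^ n) h₂) ((T ^ n) h₁ + (T ^ n) h₂) : ℂ)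
        = ((p.eval ((n : ℕ) : ℝ) : ℝ) : ℂ) := by
      rw [← hx, inner_self_eq_norm_sq_to_K, hp n]
      norm_cast
    rw [inner_add_add_self] at einner
    have e11 : (inner ℂ ((T ^ n) h₁) ((T ^ n) h₁) : ℂ) = P₁.eval (n : ℂ) := by
      rw [hP1 n, hone1, one_pow, one_mul]
    have e22 : (inner ℂ ((T ^ n) h₂) ((T ^ n) h₂) : ℂ) = P₂.eval (n : ℂ) := by
      rw [hP2 n, hone2, one_pow, one_mul]
    have e12 : (inner ℂ ((T ^ n) h₁) ((T ^ n) h₂) : ℂ) = w ^ n * P.eval (n : ℂ) := hP n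
    have e21 : (inner ℂ ((T ^ n) h₂) ((T ^ n) h₁) : ℂ)
        = ((starRingEnd ℂ) w) ^ n * (P.map (starRingEnd ℂ)).eval (n : ℂ) := by
      rw [← inner_conj_symm, e12, map_mul, map_pow]
      congr 1
      rw [eval_map, eval₂_at_natCast]
    rw [e11, e22, e12, e21] at einner
    have emap : (p.map Complex.ofRealHom).eval ((n : ℕ) : ℂ)
        = ((p.eval ((n : ℕ) : ℝ) : ℝ) : ℂ) := by
      rw [eval_map, eval₂_at_natCast]
      simp
    rw [eval_sub, eval_add, emap]
    linear_combination einner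
  have hP0 : P = 0 := lemY w ((starRingEnd ℂ) w) hw0 hwc hw1
    (P₁ + P₂ - p.map Complex.ofRealHom).natDegree P (P.map (starRingEnd ℂ)) _ le_rfl grand
  intro n
  rw [hP n, hP0]
  simp
end

section
/- Let T be a linear operator on a complex inner product space M and let z₁ = −z₂ be unimodular with z₁ ≠ z₂. If h₁ ∈ ker((T − z₁I)^{k₁}), h₂ ∈ ker((T − z₂I)^{k₂}), and ‖T^n(h₁ + h₂)‖² is a polynomial in n, then Re⟨T^n h₁, T^n h₂⟩ = 0 for all n ∈ ℕ. -/
open Finset Polynomial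

private lemma choose_poly (j : ℕ) :
    ∃ p : Polynomial ℝ, ∀ n : ℕ, p.eval (n : ℝ) = (n.choose j : ℝ) := by
  refine ⟨(j.factorial : ℝ)⁻¹ • descPochhammer ℝ j, fun n => ?_⟩
  rw [Polynomial.eval_smul, smul_eq_mul, descPochhammer_eval_eq_descFactorial,
    Nat.descFactorial_eq_factorial_mul_choose, Nat.cast_mul,
    inv_mul_cancel_left₀ (by exact_mod_cast j.factorial_ne_zero)]

private lemma poly_fam (ka kb : ℕ) (d : ℕ → ℕ → ℝ) :
    ∃ p : Polynomial ℝ, ∀ n : ℕ,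
      p.eval (n : ℝ) = ∑ j ∈ Finset.range ka, ∑ l ∈ Finset.range kb,
        (n.choose j : ℝ) * (n.choose l : ℝ) * d j l := by
  choose c hc using choose_poly
  refine ⟨∑ j ∈ Finset.range ka, ∑ l ∈ Finset.range kb, d j l • (c j * c l), fun n => ?_⟩
  rw [Polynomial.eval_finset_sum]
  refine Finset.sum_congr rfl fun j _ => ?_
  rw [Polynomial.eval_finset_sum]
  refine Finset.sum_congr rfl fun l _ => ?_
  rw [Polynomial.eval_smul, smul_eq_mul, Polynomial.eval_mul, hc, hc]
  ring

private lemma expand_pow {M : Type*} [NormedAddCommGroup M] [InnerProductSpace ℂ M]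
    (T : M →ₗ[ℂ] M) (z : ℂ) (hz : z ≠ 0) (k : ℕ) (a : M)
    (ha : ((T - z • (1 : M →ₗ[ℂ] M)) ^ k) a = 0) (n : ℕ) :
    (T ^ n) a = z ^ n • ∑ j ∈ Finset.range k,
      ((n.choose j : ℂ) * (z⁻¹) ^ j) • (((T - z • (1 : M →ₗ[ℂ] M)) ^ j) a) := by
  set N := T - z • (1 : M →ₗ[ℂ] M) with hN
  have hcomm : Commute N (z • (1 : M →ₗ[ℂ] M)) := (Commute.one_right N).smul_right z
  have hT : T = N + z • (1 : M →ₗ[ℂ] M) := by rw [hN]; abel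
  have hvan : ∀ m, k ≤ m → (N ^ m) a = 0 := by
    intro m hm
    rw [← Nat.sub_add_cancel hm, pow_add, Module.End.mul_apply, ha, map_zero]
  have step1 : (T ^ n) a =
      ∑ m ∈ Finset.range (n + 1), ((n.choose m : ℂ) * z ^ (n - m)) • ((N ^ m) a) := by
    rw [hT, hcomm.add_pow, LinearMap.sum_apply]
    refine Finset.sum_congr rfl fun m _ => ?_
    rw [_root_.smul_pow, one_pow]
    simp only [Module.End.mul_apply, LinearMap.smul_apply, Module.End.one_apply,
      Module.End.natCast_apply, map_smul, map_nsmul]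
    rw [← Nat.cast_smul_eq_nsmul ℂ (n.choose m), smul_smul]
  set g : ℕ → M := fun m => (z ^ n * ((n.choose m : ℂ) * (z⁻¹) ^ m)) • ((N ^ m) a) with hg
  have step2 : (T ^ n) a = ∑ m ∈ Finset.range (n + 1), g m := by
    rw [step1]
    refine Finset.sum_congr rfl fun m hm => ?_
    have hmn : m ≤ n := Nat.lt_succ_iff.mp (Finset.mem_range.mp hm)
    rw [hg, pow_sub₀ z hz hmn, ← inv_pow]
    congr 1
    ring
  have hsum : ∑ m ∈ Finset.range (n + 1), g m = ∑ m ∈ Finset.range k, g m := by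
    have h1 : ∑ m ∈ Finset.range (n + 1), g m = ∑ m ∈ Finset.range (max (n + 1) k), g m := by
      apply Finset.sum_subset (Finset.range_subset_range.mpr (le_max_left _ _))
      intro m _ hnm
      have hlt : n < m := by
        simp only [Finset.mem_range] at hnm; omega
      simp [hg, Nat.choose_eq_zero_of_lt hlt]
    have h2 : ∑ m ∈ Finset.range k, g m = ∑ m ∈ Finset.range (max (n + 1) k), g m := by
      apply Finset.sum_subset (Finset.range_subset_range.mpr (le_max_right _ _))
      intro m _ hnm
      have hkm : k ≤ m := by
        simp only [Finset.mem_range] at hnm; omega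
      simp [hg, hvan m hkm]
    rw [h1, ← h2]
  rw [step2, hsum, Finset.smul_sum]
  exact Finset.sum_congr rfl fun m _ => by rw [hg, smul_smul]

private lemma inner_expand {M : Type*} [NormedAddCommGroup M] [InnerProductSpace ℂ M]
    (T : M →ₗ[ℂ] M) (z w : ℂ) (hz : z ≠ 0) (hw : w ≠ 0) (a b : M) (ka kb : ℕ)
    (ha : ((T - z • (1 : M →ₗ[ℂ] M)) ^ ka) a = 0)
    (hb : ((T - w • (1 : M →ₗ[ℂ] M)) ^ kb) b = 0) :
    ∃ d : ℕ → ℕ → ℂ, ∀ n : ℕ, (inner ℂ ((T ^ n) a) ((T ^ n) b) : ℂ) =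
      (starRingEnd ℂ z * w) ^ n *
        ∑ j ∈ Finset.range ka, ∑ l ∈ Finset.range kb,
          (n.choose j : ℂ) * (n.choose l : ℂ) * d j l := by
  refine ⟨fun j l => starRingEnd ℂ ((z⁻¹) ^ j) * (w⁻¹) ^ l *
      inner ℂ (((T - z • (1 : M →ₗ[ℂ] M)) ^ j) a) (((T - w • (1 : M →ₗ[ℂ] M)) ^ l) b),
    fun n => ?_⟩
  rw [expand_pow T z hz ka a ha n, expand_pow T w hw kb b hb n,
    inner_smul_left, inner_smul_right]
  simp only [sum_inner, inner_sum, inner_smul_left, inner_smul_right, Finset.mul_sum]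
  rw [Finset.sum_comm]
  refine Finset.sum_congr rfl fun j _ => ?_
  refine Finset.sum_congr rfl fun l _ => ?_
  simp only [map_mul, map_pow, map_natCast, mul_pow]
  ring

theorem stmt_18 {M : Type*} [NormedAddCommGroup M] [InnerProductSpace ℂ M]
    (T : M →ₗ[ℂ] M) (z₁ z₂ : ℂ) (h₁ h₂ : M) (k₁ k₂ : ℕ)
    (hz1 : ‖z₁‖ = 1) (hz2 : z₂ = -z₁) (hne : z₁ ≠ z₂)
    (hk1 : ((T - z₁ • (1 : M →ₗ[ℂ] M)) ^ k₁) h₁ = 0)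
    (hk2 : ((T - z₂ • (1 : M →ₗ[ℂ] M)) ^ k₂) h₂ = 0)
    (hpoly : ∃ p : Polynomial ℝ, ∀ n : ℕ, p.eval (n : ℝ) = ‖(T ^ n) (h₁ + h₂)‖ ^ 2) :
    ∀ n : ℕ, (inner ℂ ((T ^ n) h₁) ((T ^ n) h₂) : ℂ).re = 0 := by
  obtain ⟨p, hp⟩ := hpoly
  have hz1' : z₁ ≠ 0 := by
    intro h; rw [h] at hz1; simp at hz1
  have hz2' : z₂ ≠ 0 := by rw [hz2]; simpa using hz1'
  have habs1 : starRingEnd ℂ z₁ * z₁ = 1 := by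
    rw [Complex.conj_mul', hz1]
    norm_num
  have habs2 : starRingEnd ℂ z₂ * z₂ = 1 := by
    rw [hz2, map_neg, neg_mul_neg, habs1]
  have hneg : starRingEnd ℂ z₁ * z₂ = -1 := by
    rw [hz2, mul_neg, habs1]
  obtain ⟨d12, hd12⟩ := inner_expand T z₁ z₂ hz1' hz2' h₁ h₂ k₁ k₂ hk1 hk2
  obtain ⟨d11, hd11⟩ := inner_expand T z₁ z₁ hz1' hz1' h₁ h₁ k₁ k₁ hk1 hk1
  obtain ⟨d22, hd22⟩ := inner_expand T z₂ z₂ hz2' hz2' h₂ h₂ k₂ k₂ hk2 hk2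
  obtain ⟨q, hq⟩ := poly_fam k₁ k₂ (fun j l => (d12 j l).re)
  obtain ⟨r₁, hr₁⟩ := poly_fam k₁ k₁ (fun j l => (d11 j l).re)
  obtain ⟨r₂, hr₂⟩ := poly_fam k₂ k₂ (fun j l => (d22 j l).re)
  have hre : ∀ (ka kb : ℕ) (d : ℕ → ℕ → ℂ) (n : ℕ),
      (∑ j ∈ Finset.range ka, ∑ l ∈ Finset.range kb,
        (n.choose j : ℂ) * (n.choose l : ℂ) * d j l).re =
      ∑ j ∈ Finset.range ka, ∑ l ∈ Finset.range kb,
        (n.choose j : ℝ) * (n.choose l : ℝ) * (d j l).re := by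
    intro ka kb d n
    rw [Complex.re_sum]
    refine Finset.sum_congr rfl fun j _ => ?_
    rw [Complex.re_sum]
    refine Finset.sum_congr rfl fun l _ => ?_
    simp [Complex.mul_re]
  -- the cross term
  have hg : ∀ n : ℕ, (inner ℂ ((T ^ n) h₁) ((T ^ n) h₂) : ℂ).re =
      (-1 : ℝ) ^ n * q.eval (n : ℝ) := by
    intro n
    rw [hd12 n, hneg]
    have hcast : ((-1 : ℂ)) ^ n = (((-1 : ℝ) ^ n : ℝ) : ℂ) := by push_cast; ring
    rw [hcast, Complex.re_ofReal_mul, hre, hq]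
  -- the norm terms
  have hn1 : ∀ n : ℕ, ‖(T ^ n) h₁‖ ^ 2 = r₁.eval (n : ℝ) := by
    intro n
    rw [← inner_self_eq_norm_sq (𝕜 := ℂ), RCLike.re_to_complex, hd11 n, habs1, one_pow,
      one_mul, hre, hr₁]
  have hn2 : ∀ n : ℕ, ‖(T ^ n) h₂‖ ^ 2 = r₂.eval (n : ℝ) := by
    intro n
    rw [← inner_self_eq_norm_sq (𝕜 := ℂ), RCLike.re_to_complex, hd22 n, habs2, one_pow,
      one_mul, hre, hr₂]
  -- combine
  have hkey : ∀ n : ℕ, (Polynomial.C (1/2 : ℝ) * (p - r₁ - r₂)).eval (n : ℝ)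
      = (-1 : ℝ) ^ n * q.eval (n : ℝ) := by
    intro n
    have := hp n
    rw [map_add, norm_add_sq (𝕜 := ℂ), RCLike.re_to_complex, hg n, hn1 n, hn2 n] at this
    simp only [Polynomial.eval_mul, Polynomial.eval_C, Polynomial.eval_sub]
    rw [this]
    ring
  set s : Polynomial ℝ := Polynomial.C (1/2 : ℝ) * (p - r₁ - r₂) with hs
  have heven : q - s = 0 := by
    apply Polynomial.eq_zero_of_infinite_isRoot
    apply Set.infinite_of_injective_forall_mem (f := fun m : ℕ => ((2 * m : ℕ) : ℝ))
    · intro a b hab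
      have : (2 * a : ℕ) = 2 * b := Nat.cast_injective hab
      omega
    · intro m
      show (q - s).IsRoot _
      rw [Polynomial.IsRoot, Polynomial.eval_sub, hkey (2 * m)]
      rw [pow_mul]
      norm_num
  have hodd : q + s = 0 := by
    apply Polynomial.eq_zero_of_infinite_isRoot
    apply Set.infinite_of_injective_forall_mem (f := fun m : ℕ => ((2 * m + 1 : ℕ) : ℝ))
    · intro a b hab
      have : (2 * a + 1 : ℕ) = 2 * b + 1 := Nat.cast_injective hab
      omega
    · intro m
      show (q + s).IsRoot _
      rw [Polynomial.IsRoot, Polynomial.eval_add, hkey (2 * m + 1)]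
      rw [pow_succ, pow_mul]
      norm_num
  have hq0 : q = 0 := by
    have h2 : q + q = 0 := by linear_combination heven + hodd
    exact add_self_eq_zero.mp h2
  intro n
  rw [hg n, hq0]
  simp
end

section
/- If T is an m-isometric bounded operator on a complex Hilbert space H and T^l is compact for some l ∈ ℕ, then H is finite dimensional. -/
theorem stmt_19 {H : Type*} [NormedAddCommGroup H] [InnerProductSpace ℂ H] [CompleteSpace H]
    (T : H →L[ℂ] H) (m : ℕ) (hm : 0 < m)
    (hT : ∀ h : H, ∑ k ∈ Finset.range (m + 1),
        (-1 : ℝ) ^ k * (m.choose k) * ‖(T ^ k) h‖ ^ 2 = 0)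
    (l : ℕ) (hl : 0 < l) (hcpt : IsCompactOperator (⇑(T ^ l))) :
    FiniteDimensional ℂ H := by
  obtain ⟨m', rfl⟩ : ∃ m', m = m' + 1 := ⟨m - 1, by omega⟩
  set m := m' + 1 with hmdef
  set d : ℕ → ℝ := fun k => -((-1 : ℝ) ^ (k + 1) * (m.choose (k + 1))) with hd
  -- recurrence
  have hrec : ∀ (j : ℕ) (h : H), ‖(T ^ j) h‖ ^ 2
      = ∑ k ∈ Finset.range m, d k * ‖(T ^ (k + 1 + j)) h‖ ^ 2 := by
    intro j h
    have h0 := hT ((T ^ j) h)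
    have hpow : ∀ k : ℕ, (T ^ k) ((T ^ j) h) = (T ^ (k + j)) h := by
      intro k; rw [pow_add]; rfl
    simp only [hpow] at h0
    rw [Finset.sum_range_succ'] at h0
    have : ∑ k ∈ Finset.range m, d k * ‖(T ^ (k + 1 + j)) h‖ ^ 2
        = -∑ k ∈ Finset.range m, (-1 : ℝ) ^ (k + 1) * (m.choose (k + 1))
            * ‖(T ^ (k + 1 + j)) h‖ ^ 2 := by
      rw [← Finset.sum_neg_distrib]
      exact Finset.sum_congr rfl fun k _ => by simp [hd, neg_mul]
    rw [this]
    simp only [pow_zero, Nat.choose_zero_right, Nat.cast_one, one_mul, zero_add] at h0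
    linarith
  -- universal linear combination
  have key : ∀ j : ℕ, ∃ c : ℕ → ℝ, ∀ h : H,
      ‖h‖ ^ 2 = ∑ i ∈ Finset.range m, c i * ‖(T ^ (i + j)) h‖ ^ 2 := by
    intro j
    induction j with
    | zero =>
      refine ⟨fun i => if i = 0 then 1 else 0, fun h => ?_⟩
      rw [Finset.sum_eq_single_of_mem 0 (Finset.mem_range.2 hm)]
      · simp
      · intro i _ hi; simp [hi]
    | succ j ih =>
      obtain ⟨c, hc⟩ := ih
      refine ⟨fun i => (if i + 1 < m then c (i + 1) else 0) + c 0 * d i, fun h => ?_⟩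
      have hA : ∀ i : ℕ, i + (j + 1) = i + 1 + j := fun i => by omega
      simp only [hA]
      have expand : ∑ i ∈ Finset.range m,
          ((if i + 1 < m then c (i + 1) else 0) + c 0 * d i) * ‖(T ^ (i + 1 + j)) h‖ ^ 2
          = (∑ i ∈ Finset.range m,
              (if i + 1 < m then c (i + 1) else 0) * ‖(T ^ (i + 1 + j)) h‖ ^ 2)
            + c 0 * ∑ i ∈ Finset.range m, d i * ‖(T ^ (i + 1 + j)) h‖ ^ 2 := by
        rw [Finset.mul_sum, ← Finset.sum_add_distrib]
        exact Finset.sum_congr rfl fun i _ => by ring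
      rw [expand, ← hrec j h]
      have first : ∑ i ∈ Finset.range m,
          (if i + 1 < m then c (i + 1) else 0) * ‖(T ^ (i + 1 + j)) h‖ ^ 2
          = ∑ i ∈ Finset.range m', c (i + 1) * ‖(T ^ (i + 1 + j)) h‖ ^ 2 := by
        rw [Finset.sum_range_succ]
        have : ¬ (m' + 1 < m) := by omega
        rw [if_neg this, zero_mul, add_zero]
        exact Finset.sum_congr rfl fun i hi => by
          rw [if_pos (by have := Finset.mem_range.1 hi; omega)]
      rw [first, hc h, Finset.sum_range_succ']
      simp only [zero_add]
  -- bound : T ^ l is bounded below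
  obtain ⟨c, hc⟩ := key l
  set C : ℝ := ∑ i ∈ Finset.range m, |c i| * ‖(T ^ i : H →L[ℂ] H)‖ ^ 2 with hC
  have hCnn : 0 ≤ C := Finset.sum_nonneg fun i _ => by positivity
  have hb : ∀ h : H, ‖h‖ ^ 2 ≤ (C + 1) * ‖(T ^ l) h‖ ^ 2 := by
    intro h
    have step : ∀ i ∈ Finset.range m, c i * ‖(T ^ (i + l)) h‖ ^ 2
        ≤ |c i| * ‖(T ^ i : H →L[ℂ] H)‖ ^ 2 * ‖(T ^ l) h‖ ^ 2 := by
      intro i _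
      have h1 : ‖(T ^ (i + l)) h‖ ≤ ‖(T ^ i : H →L[ℂ] H)‖ * ‖(T ^ l) h‖ := by
        rw [pow_add]
        exact (T ^ i).le_opNorm ((T ^ l) h)
      have h2 : ‖(T ^ (i + l)) h‖ ^ 2 ≤ (‖(T ^ i : H →L[ℂ] H)‖ * ‖(T ^ l) h‖) ^ 2 :=
        pow_le_pow_left₀ (norm_nonneg _) h1 2
      calc c i * ‖(T ^ (i + l)) h‖ ^ 2 ≤ |c i| * ‖(T ^ (i + l)) h‖ ^ 2 :=
            mul_le_mul_of_nonneg_right (le_abs_self _) (by positivity)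
        _ ≤ |c i| * ((‖(T ^ i : H →L[ℂ] H)‖ * ‖(T ^ l) h‖) ^ 2) :=
            mul_le_mul_of_nonneg_left h2 (abs_nonneg _)
        _ = |c i| * ‖(T ^ i : H →L[ℂ] H)‖ ^ 2 * ‖(T ^ l) h‖ ^ 2 := by ring
    have : ‖h‖ ^ 2 ≤ ∑ i ∈ Finset.range m,
        |c i| * ‖(T ^ i : H →L[ℂ] H)‖ ^ 2 * ‖(T ^ l) h‖ ^ 2 := by
      rw [hc h]; exact Finset.sum_le_sum step
    have sumeq : ∑ i ∈ Finset.range m,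
        |c i| * ‖(T ^ i : H →L[ℂ] H)‖ ^ 2 * ‖(T ^ l) h‖ ^ 2 = C * ‖(T ^ l) h‖ ^ 2 := by
      rw [hC, Finset.sum_mul]
    nlinarith [sq_nonneg (‖(T ^ l) h‖)]
  -- antilipschitz
  have halip : AntilipschitzWith (Real.sqrt (C + 1)).toNNReal ⇑(T ^ l) := by
    apply ContinuousLinearMap.antilipschitz_of_bound
    intro x
    rw [Real.coe_toNNReal _ (Real.sqrt_nonneg _)]
    have h1 : ‖x‖ = Real.sqrt (‖x‖ ^ 2) := by
      rw [Real.sqrt_sq (norm_nonneg _)]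
    rw [h1]
    calc Real.sqrt (‖x‖ ^ 2) ≤ Real.sqrt ((C + 1) * ‖(T ^ l) x‖ ^ 2) :=
          Real.sqrt_le_sqrt (hb x)
      _ = Real.sqrt (C + 1) * ‖(T ^ l) x‖ := by
          rw [Real.sqrt_mul (by linarith), Real.sqrt_sq (norm_nonneg _)]
  -- compactness of a closed ball
  obtain ⟨Kc, hKc, hnhds⟩ := hcpt
  obtain ⟨r, hr, hball⟩ := Metric.mem_nhds_iff.mp hnhds
  have hsub : Metric.closedBall (0 : H) (r / 2) ⊆ (⇑(T ^ l)) ⁻¹' Kc :=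
    fun x hx => hball (Metric.closedBall_subset_ball (by linarith) hx)
  have hUI : IsUniformInducing ⇑(T ^ l) :=
    halip.isUniformInducing (T ^ l).uniformContinuous
  have htb : TotallyBounded (Metric.closedBall (0 : H) (r / 2)) :=
    TotallyBounded.subset hsub (totallyBounded_preimage hUI hKc.totallyBounded)
  have hcomp : IsCompact (Metric.closedBall (0 : H) (r / 2)) :=
    TotallyBounded.isCompact_of_isClosed htb Metric.isClosed_closedBall
  exact FiniteDimensional.of_isCompact_closedBall₀ ℂ (by linarith) hcomp
end
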